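/- arXiv:math/0609794 — 3 statements merged into one kernel-verified Lean document; each statement's English description precedes it below -/
import Mathlib

section
/- Let (X,T) be a transitive topological dynamical system. Then the strongly doubly regionally proximal relation RP²ₛ is the equality relation on X if and only if the doubly regionally proximal relation RP² is the equality relation on X. -/
open Filter Topology

/-- The `n`-th iterate (`n : ℤ`) of a homeomorphism `T : X → X`. -/
def iterZ {X : Type*} [TopologicalSpace X] (T : X ≃ₜ X) (n : ℤ) : X → X :=
  fun x => (T.toEquiv ^ n) x

section Defs

variable {X : Type*} [TopologicalSpace X]

/-- The set of parallelograms `𝒫`: the closure in `X⁴` of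
`{(x, Tᵐx, Tⁿx, Tᵐ⁺ⁿx) : x ∈ X, m, n ∈ ℤ}`. -/
def Para (T : X ≃ₜ X) : Set (X × X × X × X) :=
  closure {q | ∃ (x : X) (m n : ℤ),
    q = (x, iterZ T m x, iterZ T n x, iterZ T (m + n) x)}

/-- The set of parallelepipeds `𝒬`: the closure in `X⁸ = X⁴ × X⁴` of
`{(x, Tᵐx, Tⁿx, Tᵐ⁺ⁿx, Tᵖx, Tᵐ⁺ᵖx, Tⁿ⁺ᵖx, Tᵐ⁺ⁿ⁺ᵖx) : x ∈ X, m, n, p ∈ ℤ}`. -/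
def Pip (T : X ≃ₜ X) : Set ((X × X × X × X) × (X × X × X × X)) :=
  closure {q | ∃ (x : X) (m n p : ℤ),
    q = ((x, iterZ T m x, iterZ T n x, iterZ T (m + n) x),
         (iterZ T p x, iterZ T (m + p) x, iterZ T (n + p) x, iterZ T (m + n + p) x))}

end Defs

section MetricDefs

variable {X : Type*} [MetricSpace X]

/-- `(X, T)` is transitive: some point has dense orbit `{Tⁿx : n ∈ ℤ}`. -/
def IsTransitive (T : X ≃ₜ X) : Prop :=
  ∃ x : X, Dense (Set.range fun n : ℤ => iterZ T n x)

/-- `(X, T)` is minimal: every point has dense orbit. -/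
def IsMinimal (T : X ≃ₜ X) : Prop :=
  ∀ x : X, Dense (Set.range fun n : ℤ => iterZ T n x)

/-- `(x, y)` is a proximal pair: `inf_{n ∈ ℤ} d(Tⁿx, Tⁿy) = 0`. -/
def ProximalPair (T : X ≃ₜ X) (x y : X) : Prop :=
  ⨅ n : ℤ, dist (iterZ T n x) (iterZ T n y) = 0

/-- `(X, T)` is distal: every pair of distinct points is distal,
i.e. `inf_{n ∈ ℤ} d(Tⁿx, Tⁿy) > 0`. -/
def IsDistal (T : X ≃ₜ X) : Prop :=
  ∀ x y : X, x ≠ y → 0 < ⨅ n : ℤ, dist (iterZ T n x) (iterZ T n y)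

/-- The regionally proximal relation `RP`. -/
def RP (T : X ≃ₜ X) (x y : X) : Prop :=
  ∀ ε > 0, ∃ x' y' : X, ∃ n : ℤ,
    dist x' x < ε ∧ dist y' y < ε ∧ dist (iterZ T n x') (iterZ T n y') < ε

/-- The doubly regionally proximal relation `RP²`. -/
def RP2 (T : X ≃ₜ X) (x y : X) : Prop :=
  ∀ ε > 0, ∃ x' y' : X, ∃ m n : ℤ,
    dist x' x < ε ∧ dist y' y < ε ∧
    dist (iterZ T m x') (iterZ T m y') < ε ∧
    dist (iterZ T n x') (iterZ T n y') < ε ∧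
    dist (iterZ T (m + n) x') (iterZ T (m + n) y') < ε

/-- The strongly doubly regionally proximal relation `RP²ₛ`. -/
def RP2S (T : X ≃ₜ X) (x y : X) : Prop :=
  ∀ ε > 0, ∃ x' y' : X, ∃ m n : ℤ,
    dist x' x < ε ∧ dist y' y < ε ∧
    dist (iterZ T m x') y < ε ∧ dist (iterZ T n x') y < ε ∧
    dist (iterZ T (m + n) x') y < ε ∧
    dist (iterZ T m y') y < ε ∧ dist (iterZ T n y') y < ε ∧
    dist (iterZ T (m + n) y') y < ε

end MetricDefs

set_option linter.unusedSectionVars false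
attribute [local instance] Ultrafilter.add Ultrafilter.addSemigroup

section UFTools

variable {M : Type*} {Y : Type*} [TopologicalSpace Y] [T2Space Y]

/-- The limit of `f` along the ultrafilter `p` (in a compact T2 space). -/
noncomputable def ulim (p : Ultrafilter M) (f : M → Y) : Y := Ultrafilter.extend f p

variable [CompactSpace Y]

lemma tendsto_ulim (p : Ultrafilter M) (f : M → Y) : Tendsto f ↑p (𝓝 (ulim p f)) := by
  have h := (ultrafilter_extend_eq_iff (f := f) (b := p) (c := ulim p f)).mp rfl
  rwa [Ultrafilter.coe_map] at h

lemma ulim_unique {p : Ultrafilter M} {f : M → Y} {L : Y}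
    (h : Tendsto f ↑p (𝓝 L)) : ulim p f = L :=
  tendsto_nhds_unique (tendsto_ulim p f) h

lemma continuous_ulim (f : M → Y) : Continuous (fun p : Ultrafilter M => ulim p f) :=
  continuous_ultrafilter_extend f

lemma exists_ultrafilter_tendsto {Z : Type*} [TopologicalSpace Z] {f : M → Z} {Q : Z}
    (hQ : Q ∈ closure (Set.range f)) : ∃ p : Ultrafilter M, Tendsto f ↑p (𝓝 Q) := by
  have hne : NeBot (Filter.comap f (𝓝 Q)) := by
    rw [comap_neBot_iff]
    intro t ht
    rcases mem_closure_iff_nhds.mp hQ t ht with ⟨z, hzt, a, rfl⟩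
    exact ⟨a, hzt⟩
  refine ⟨Ultrafilter.of (Filter.comap f (𝓝 Q)), ?_⟩
  calc Filter.map f ↑(Ultrafilter.of (Filter.comap f (𝓝 Q)))
      ≤ Filter.map f (Filter.comap f (𝓝 Q)) := Filter.map_mono (Ultrafilter.of_le _)
    _ ≤ 𝓝 Q := Filter.map_comap_le

variable [AddSemigroup M]

lemma tendsto_uadd {p q : Ultrafilter M} {f : M → Y} {g : M → Y} {L : Y}
    (hg : ∀ a, Tendsto (fun b => f (a + b)) ↑q (𝓝 (g a)))
    (hL : Tendsto g ↑p (𝓝 L)) : Tendsto f ↑(p + q) (𝓝 L) := by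
  intro U hU
  rcases mem_nhds_iff.mp hU with ⟨V, hVU, hVopen, hLV⟩
  rw [Filter.mem_map]
  have hev : ∀ᶠ a in ↑p, ∀ᶠ b in ↑q, f (a + b) ∈ U := by
    filter_upwards [hL (hVopen.mem_nhds hLV)] with a ha
    filter_upwards [hg a (hVopen.mem_nhds ha)] with b hb using hVU hb
  exact (Ultrafilter.eventually_add p q (fun m => f m ∈ U)).mpr hev

lemma exists_idem_ultra {C : Set (Ultrafilter M)} (hC : IsClosed C) (hne : C.Nonempty)
    (hadd : ∀ p ∈ C, ∀ q ∈ C, p + q ∈ C) : ∃ u ∈ C, u + u = u :=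
  exists_idempotent_in_compact_add_subsemigroup Ultrafilter.continuous_add_left C hne
    hC.isCompact hadd

end UFTools

section IterZ

variable {X : Type*} [TopologicalSpace X] (T : X ≃ₜ X)

lemma iterZ_zero (x : X) : iterZ T 0 x = x := by simp [iterZ]

lemma iterZ_add (m n : ℤ) (x : X) : iterZ T (m + n) x = iterZ T m (iterZ T n x) := by
  simp [iterZ, zpow_add, Equiv.Perm.mul_apply]

lemma iterZ_congr {m n : ℤ} (h : m = n) (x : X) : iterZ T m x = iterZ T n x := by rw [h]

lemma iterZ_split {a b c : ℤ} (h : a = b + c) (x : X) :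
    iterZ T a x = iterZ T b (iterZ T c x) := by rw [h, iterZ_add]

lemma continuous_iterZ (n : ℤ) : Continuous (iterZ T n) := by
  induction n using Int.induction_on with
  | zero =>
    have : iterZ T 0 = id := funext fun x => iterZ_zero T x
    rw [this]; exact continuous_id
  | succ k ih =>
    have h : iterZ T ((k : ℤ) + 1) = fun x => T (iterZ T k x) := by
      funext x
      rw [iterZ_split T (show (k:ℤ)+1 = 1 + k by ring)]
      simp [iterZ, zpow_one]
    rw [h]
    exact T.continuous.comp ih
  | pred k ih =>
    have h : iterZ T (-(k : ℤ) - 1) = fun x => T.symm (iterZ T (-(k:ℤ)) x) := by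
      funext x
      rw [iterZ_split T (show -(k:ℤ)-1 = (-1) + (-(k:ℤ)) by ring)]
      have : iterZ T (-1) = fun y => T.symm y := by
        funext y
        simp [iterZ, zpow_neg, zpow_one]
      rw [this]
    rw [h]
    exact T.symm.continuous.comp ih

end IterZ

section Uact

variable {X : Type*} [MetricSpace X] [CompactSpace X] [Nonempty X] (T : X ≃ₜ X)

/-- The ultrafilter limit of the orbit. -/
noncomputable def uact (p : Ultrafilter ℤ) (x : X) : X := ulim p (fun n => iterZ T n x)

lemma tendsto_uact (p : Ultrafilter ℤ) (x : X) :
    Tendsto (fun n => iterZ T n x) ↑p (𝓝 (uact T p x)) := tendsto_ulim _ _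

lemma continuous_uact (x : X) : Continuous (fun p => uact T p x) := continuous_ulim _

lemma uact_add (p q : Ultrafilter ℤ) (x : X) :
    uact T (p + q) x = uact T p (uact T q x) := by
  apply ulim_unique
  apply tendsto_uadd (g := fun a => iterZ T a (uact T q x))
  · intro a
    have h1 : Tendsto (fun b => iterZ T b x) ↑q (𝓝 (uact T q x)) := tendsto_uact T q x
    have h2 := ((continuous_iterZ T a).tendsto _).comp h1
    have h3 : (fun b => iterZ T a (iterZ T b x)) = fun b => iterZ T (a + b) x := by
      funext b; rw [iterZ_add]
    rw [← h3]; exact h2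
  · exact tendsto_uact T p _

/-- Proximality (ε-form). -/
def Prox (x y : X) : Prop := ∀ ε > 0, ∃ n : ℤ, dist (iterZ T n x) (iterZ T n y) < ε

lemma uact_eq_of_prox {x y : X} (h : Prox T x y) : ∃ q, uact T q x = uact T q y := by
  set f : ℤ → ℝ := fun n => dist (iterZ T n x) (iterZ T n y) with hf
  have h0 : (0 : ℝ) ∈ closure (Set.range f) := by
    rw [Metric.mem_closure_iff]
    intro ε hε
    obtain ⟨n, hn⟩ := h ε hε
    refine ⟨f n, ⟨n, rfl⟩, ?_⟩
    rw [Real.dist_eq]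
    rw [abs_sub_comm, sub_zero, abs_of_nonneg dist_nonneg]
    exact hn
  obtain ⟨q, hq⟩ := exists_ultrafilter_tendsto h0
  refine ⟨q, ?_⟩
  have h1 : Tendsto (fun n : ℤ => (iterZ T n x, iterZ T n y)) ↑q
      (𝓝 (uact T q x, uact T q y)) :=
    (tendsto_uact T q x).prodMk_nhds (tendsto_uact T q y)
  have h2 : Tendsto f ↑q (𝓝 (dist (uact T q x) (uact T q y))) :=
    (continuous_dist.tendsto _).comp h1
  have h3 : dist (uact T q x) (uact T q y) = 0 := tendsto_nhds_unique h2 hq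
  exact dist_eq_zero.mp h3

attribute [local instance] Ultrafilter.add Ultrafilter.addSemigroup

lemma rp2s_of_idem {u : Ultrafilter ℤ} (hu : u + u = u) {w z : X}
    (hwz : uact T u w = z) (hz : uact T u z = z) : RP2S T w z := by
  intro ε hε
  set A : Set ℤ := {n | dist (iterZ T n w) z < ε ∧ dist (iterZ T n z) z < ε} with hA
  have hAu : A ∈ u := by
    have h1 : {n : ℤ | dist (iterZ T n w) z < ε} ∈ u := by
      have := (tendsto_uact T u w) (Metric.ball_mem_nhds (uact T u w) hε)
      rw [hwz] at this
      exact this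
    have h2 : {n : ℤ | dist (iterZ T n z) z < ε} ∈ u := by
      have := (tendsto_uact T u z) (Metric.ball_mem_nhds (uact T u z) hε)
      rw [hz] at this
      exact this
    exact Filter.inter_mem h1 h2
  have hA2 : {a : ℤ | {b : ℤ | a + b ∈ A} ∈ u} ∈ u := by
    have hAuu : A ∈ u + u := by rw [hu]; exact hAu
    exact (Ultrafilter.eventually_add u u (fun m => m ∈ A)).mp hAuu
  obtain ⟨m, hmA, hmB⟩ := Ultrafilter.nonempty_of_mem (Filter.inter_mem hAu hA2)
  obtain ⟨n, hnA, hnB⟩ := Ultrafilter.nonempty_of_mem (Filter.inter_mem hAu hmB)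
  refine ⟨w, z, m, n, by simpa using hε, by simpa using hε,
    hmA.1, hnA.1, hnB.1, hmA.2, hnA.2, hnB.2⟩

lemma eq_of_prox (hRPS : ∀ a b : X, RP2S T a b → a = b) {x y : X}
    (h : Prox T x y) : x = y := by
  obtain ⟨q, hq⟩ := uact_eq_of_prox T h
  set C : Set (Ultrafilter ℤ) := {r | uact T r x = uact T r y} with hC
  have hCclosed : IsClosed C := isClosed_eq (continuous_uact T x) (continuous_uact T y)
  have hCadd : ∀ p ∈ C, ∀ q' ∈ C, p + q' ∈ C := by
    intro p _ q' hq'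
    show uact T (p + q') x = uact T (p + q') y
    rw [uact_add, uact_add, hq']
  obtain ⟨u, huC, huu⟩ := exists_idem_ultra hCclosed ⟨q, hq⟩ hCadd
  set z : X := uact T u x with hz
  have hzy : uact T u y = z := (huC : uact T u x = uact T u y).symm
  have hzz : uact T u z = z := by
    rw [hz, ← uact_add, huu]
  have h1 : RP2S T x z := rp2s_of_idem T huu rfl hzz
  have h2 : RP2S T y z := rp2s_of_idem T huu hzy hzz
  rw [hRPS x z h1, hRPS y z h2]

end Uact

section LemmaM

attribute [local instance] Ultrafilter.add Ultrafilter.addSemigroup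

variable {M : Type*} [AddMonoid M] {Y : Type*} [MetricSpace Y] [CompactSpace Y] [Nonempty Y]
variable (φ : M → Y → Y)

lemma uactY_add (hcont : ∀ g, Continuous (φ g))
    (hadd : ∀ g h P, φ (g + h) P = φ g (φ h P)) (p p' : Ultrafilter M) (P : Y) :
    ulim (p + p') (fun g => φ g P) = ulim p (fun g => φ g (ulim p' (fun g' => φ g' P))) := by
  apply ulim_unique
  apply tendsto_uadd (g := fun a => φ a (ulim p' (fun g' => φ g' P)))
  · intro a
    have h1 : Tendsto (fun g' => φ g' P) ↑p' (𝓝 (ulim p' (fun g' => φ g' P))) :=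
      tendsto_ulim _ _
    have h2 := ((hcont a).tendsto _).comp h1
    have h3 : (fun b => φ a (φ b P)) = fun b => φ (a + b) P := by
      funext b; rw [hadd]
    rw [← h3]; exact h2
  · exact tendsto_ulim _ _

lemma orbit_closure_inv (hcont : ∀ g, Continuous (φ g))
    (hadd : ∀ g h P, φ (g + h) P = φ g (φ h P)) (Q : Y) (g : M) :
    ∀ w ∈ closure (Set.range fun g' => φ g' Q), φ g w ∈ closure (Set.range fun g' => φ g' Q) := by
  intro w hw
  have h1 : φ g w ∈ φ g '' closure (Set.range fun g' => φ g' Q) := ⟨w, hw, rfl⟩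
  have h2 := (image_closure_subset_closure_image (hcont g)) h1
  refine closure_mono ?_ h2
  rintro _ ⟨_, ⟨h', rfl⟩, rfl⟩
  exact ⟨g + h', hadd g h' Q⟩

lemma ulim_mem_orbit_closure (hcont : ∀ g, Continuous (φ g))
    (hadd : ∀ g h P, φ (g + h) P = φ g (φ h P)) (Q : Y) (r : Ultrafilter M) :
    ∀ w ∈ closure (Set.range fun g' => φ g' Q),
      ulim r (fun g => φ g w) ∈ closure (Set.range fun g' => φ g' Q) :=
  fun w hw => isClosed_closure.mem_of_tendsto (tendsto_ulim r _)
    (Filter.Eventually.of_forall fun g => orbit_closure_inv φ hcont hadd Q g w hw)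

lemma lemmaM (hcont : ∀ g, Continuous (φ g))
    (hadd : ∀ g h P, φ (g + h) P = φ g (φ h P)) (hzero : ∀ P, φ 0 P = P)
    (hdistal : ∀ P Q : Y, (∀ ε > 0, ∃ g, dist (φ g P) (φ g Q) < ε) → P = Q)
    {P Q : Y} (hQ : Q ∈ closure (Set.range fun g => φ g P)) :
    P ∈ closure (Set.range fun g => φ g Q) := by
  obtain ⟨q, hq⟩ := exists_ultrafilter_tendsto hQ
  set Z := closure (Set.range fun g => φ g Q) with hZdef
  set C : Set (Ultrafilter M) := {r | ulim r (fun g => φ g P) ∈ Z} with hCdef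
  have hCclosed : IsClosed C := isClosed_closure.preimage (continuous_ulim _)
  have hCq : q ∈ C := by
    show ulim q (fun g => φ g P) ∈ Z
    rw [ulim_unique hq]
    exact subset_closure ⟨0, hzero Q⟩
  have hCadd : ∀ p ∈ C, ∀ p' ∈ C, p + p' ∈ C := by
    intro p _ p' hp'
    show ulim (p + p') (fun g => φ g P) ∈ Z
    rw [uactY_add φ hcont hadd]
    exact ulim_mem_orbit_closure φ hcont hadd Q p _ hp'
  obtain ⟨u, huC, huu⟩ := exists_idem_ultra hCclosed ⟨q, hCq⟩ hCadd
  set w : Y := ulim u (fun g => φ g P) with hwdef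
  have hwZ : w ∈ Z := huC
  have hww : ulim u (fun g => φ g w) = w := by
    rw [hwdef, ← uactY_add φ hcont hadd, huu]
  have hprox : ∀ ε > 0, ∃ g, dist (φ g P) (φ g w) < ε := by
    intro ε hε
    have h1 : {g | dist (φ g P) w < ε / 2} ∈ u := by
      have := (tendsto_ulim u (fun g => φ g P)) (Metric.ball_mem_nhds w (half_pos hε))
      exact this
    have h2 : {g | dist (φ g w) w < ε / 2} ∈ u := by
      have := (tendsto_ulim u (fun g => φ g w)) (Metric.ball_mem_nhds _ (half_pos hε))
      rw [hww] at this
      exact this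
    obtain ⟨g, hg1, hg2⟩ := Ultrafilter.nonempty_of_mem (Filter.inter_mem h1 h2)
    refine ⟨g, ?_⟩
    calc dist (φ g P) (φ g w) ≤ dist (φ g P) w + dist (φ g w) w := dist_triangle_right _ _ _
    _ < ε / 2 + ε / 2 := add_lt_add hg1 hg2
    _ = ε := by ring
  rw [hdistal P w hprox]
  exact hwZ

end LemmaM

section DistHelpers

variable {A B : Type*} [PseudoMetricSpace A] [PseudoMetricSpace B]

lemma dfst (p q : A × B) : dist p.1 q.1 ≤ dist p q := by
  rw [Prod.dist_eq]; exact le_max_left _ _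

lemma dsnd (p q : A × B) : dist p.2 q.2 ≤ dist p q := by
  rw [Prod.dist_eq]; exact le_max_right _ _

end DistHelpers

section TendAux

lemma tend_of_dist_lt {Z : Type*} [PseudoMetricSpace Z] {f : ℕ → Z} {c : Z}
    (h : ∀ k : ℕ, dist (f k) c < 1 / ((k : ℝ) + 1)) : Filter.Tendsto f atTop (𝓝 c) := by
  rw [tendsto_iff_dist_tendsto_zero]
  exact squeeze_zero (fun k => dist_nonneg) (fun k => (h k).le)
    tendsto_one_div_add_atTop_nhds_zero_nat

end TendAux

section Phi4

variable {X : Type*} [MetricSpace X] [CompactSpace X] [Nonempty X] (T : X ≃ₜ X)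

/-- Face-group action on pairs of parallelograms with shared exponents. -/
def phi4 (g : (ℤ × ℤ) × ℤ × ℤ) (P : (X × X × X × X) × X × X × X × X) :
    (X × X × X × X) × X × X × X × X :=
  ((iterZ T g.1.1 P.1.1, iterZ T (g.1.1 + g.2.1) P.1.2.1,
    iterZ T (g.1.1 + g.2.2) P.1.2.2.1, iterZ T (g.1.1 + g.2.1 + g.2.2) P.1.2.2.2),
   (iterZ T g.1.2 P.2.1, iterZ T (g.1.2 + g.2.1) P.2.2.1,
    iterZ T (g.1.2 + g.2.2) P.2.2.2.1, iterZ T (g.1.2 + g.2.1 + g.2.2) P.2.2.2.2))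

lemma phi4_cont (g : (ℤ × ℤ) × ℤ × ℤ) : Continuous (phi4 T g) := by
  unfold phi4
  have p11 : Continuous fun P : (X × X × X × X) × X × X × X × X => P.1.1 :=
    continuous_fst.comp continuous_fst
  have p121 : Continuous fun P : (X × X × X × X) × X × X × X × X => P.1.2.1 :=
    continuous_fst.comp (continuous_snd.comp continuous_fst)
  have p1221 : Continuous fun P : (X × X × X × X) × X × X × X × X => P.1.2.2.1 :=
    continuous_fst.comp (continuous_snd.comp (continuous_snd.comp continuous_fst))
  have p1222 : Continuous fun P : (X × X × X × X) × X × X × X × X => P.1.2.2.2 :=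
    continuous_snd.comp (continuous_snd.comp (continuous_snd.comp continuous_fst))
  have p21 : Continuous fun P : (X × X × X × X) × X × X × X × X => P.2.1 :=
    continuous_fst.comp continuous_snd
  have p221 : Continuous fun P : (X × X × X × X) × X × X × X × X => P.2.2.1 :=
    continuous_fst.comp (continuous_snd.comp continuous_snd)
  have p2221 : Continuous fun P : (X × X × X × X) × X × X × X × X => P.2.2.2.1 :=
    continuous_fst.comp (continuous_snd.comp (continuous_snd.comp continuous_snd))
  have p2222 : Continuous fun P : (X × X × X × X) × X × X × X × X => P.2.2.2.2 :=
    continuous_snd.comp (continuous_snd.comp (continuous_snd.comp continuous_snd))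
  exact (((( (continuous_iterZ T _).comp p11).prodMk
    ((((continuous_iterZ T _).comp p121)).prodMk
      ((((continuous_iterZ T _).comp p1221)).prodMk
        (((continuous_iterZ T _).comp p1222)))))).prodMk
    ((((continuous_iterZ T _).comp p21)).prodMk
      ((((continuous_iterZ T _).comp p221)).prodMk
        ((((continuous_iterZ T _).comp p2221)).prodMk
          (((continuous_iterZ T _).comp p2222))))))

lemma phi4_zero (P : (X × X × X × X) × X × X × X × X) : phi4 T 0 P = P := by
  obtain ⟨⟨a, b, c, d⟩, e, f, g, h⟩ := P
  simp [phi4, iterZ_zero]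

lemma phi4_add (g h : (ℤ × ℤ) × ℤ × ℤ) (P : (X × X × X × X) × X × X × X × X) :
    phi4 T (g + h) P = phi4 T g (phi4 T h P) := by
  obtain ⟨⟨a, b, c, d⟩, e, f, g', h'⟩ := P
  simp only [phi4, Prod.fst_add, Prod.snd_add, Prod.mk.injEq]
  refine ⟨⟨?_, ?_, ?_, ?_⟩, ?_, ?_, ?_, ?_⟩ <;>
    exact iterZ_split T (by ring) _

/-- Generating set: pairs of parallelograms with common exponents. -/
def genN : Set ((X × X × X × X) × X × X × X × X) :=
  {P | ∃ z w m n, P = ((z, iterZ T m z, iterZ T n z, iterZ T (m + n) z),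
    (w, iterZ T m w, iterZ T n w, iterZ T (m + n) w))}

lemma phi4_mem_genN (g : (ℤ × ℤ) × ℤ × ℤ) {P} (hP : P ∈ genN T) : phi4 T g P ∈ genN T := by
  obtain ⟨z, w, m, n, rfl⟩ := hP
  refine ⟨iterZ T g.1.1 z, iterZ T g.1.2 w, m + g.2.1, n + g.2.2, ?_⟩
  simp only [phi4, Prod.mk.injEq]
  refine ⟨⟨trivial, ?_, ?_, ?_⟩, trivial, ?_, ?_, ?_⟩ <;>
  · rw [← iterZ_add, ← iterZ_add]
    exact iterZ_congr T (by ring) _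

lemma mem_NN_inv (g : (ℤ × ℤ) × ℤ × ℤ) {w} (hw : w ∈ closure (genN T)) :
    phi4 T g w ∈ closure (genN T) := by
  have h1 : phi4 T g w ∈ phi4 T g '' closure (genN T) := ⟨w, hw, rfl⟩
  have h2 := (image_closure_subset_closure_image (phi4_cont T g)) h1
  refine closure_mono ?_ h2
  rintro _ ⟨P, hP, rfl⟩
  exact phi4_mem_genN T g hP

end Phi4

section Main

variable {X : Type*} [MetricSpace X] [CompactSpace X] [Nonempty X] (T : X ≃ₜ X)

/-- gen map at fixed exponents. -/
def genMap (m n : ℤ) : X × X → (X × X × X × X) × X × X × X × X := fun p =>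
  ((p.1, iterZ T m p.1, iterZ T n p.1, iterZ T (m + n) p.1),
   (p.2, iterZ T m p.2, iterZ T n p.2, iterZ T (m + n) p.2))

lemma genMap_cont (m n : ℤ) : Continuous (genMap T m n) :=
  (continuous_fst.prodMk (((continuous_iterZ T m).comp continuous_fst).prodMk
    (((continuous_iterZ T n).comp continuous_fst).prodMk
      ((continuous_iterZ T (m + n)).comp continuous_fst)))).prodMk
  (continuous_snd.prodMk (((continuous_iterZ T m).comp continuous_snd).prodMk
    (((continuous_iterZ T n).comp continuous_snd).prodMk
      ((continuous_iterZ T (m + n)).comp continuous_snd))))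

lemma genN_sub_orbit {ω : X} (hω : Dense (Set.range fun n : ℤ => iterZ T n ω)) :
    genN T ⊆ closure (Set.range fun g => phi4 T g
      ((((ω, ω, ω, ω), (ω, ω, ω, ω))) : (X × X × X × X) × X × X × X × X)) := by
  rintro _ ⟨z, w, m, n, rfl⟩
  have hdense : (z, w) ∈ closure {p : X × X | ∃ s s' : ℤ, p = (iterZ T s ω, iterZ T s' ω)} := by
    rw [Metric.mem_closure_iff]
    intro ε hε
    obtain ⟨q1, hq1b, s, rfl⟩ := Metric.dense_iff.mp hω z ε hε
    obtain ⟨q2, hq2b, s', rfl⟩ := Metric.dense_iff.mp hω w ε hε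
    refine ⟨(iterZ T s ω, iterZ T s' ω), ⟨s, s', rfl⟩, ?_⟩
    rw [Prod.dist_eq]
    exact max_lt (by simpa [Metric.mem_ball, dist_comm] using hq1b)
      (by simpa [Metric.mem_ball, dist_comm] using hq2b)
  have h1 : genMap T m n (z, w) ∈
      closure (genMap T m n '' {p : X × X | ∃ s s' : ℤ, p = (iterZ T s ω, iterZ T s' ω)}) :=
    image_closure_subset_closure_image (genMap_cont T m n) ⟨(z, w), hdense, rfl⟩
  have h2 : genMap T m n '' {p : X × X | ∃ s s' : ℤ, p = (iterZ T s ω, iterZ T s' ω)} ⊆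
      Set.range fun g => phi4 T g (((ω, ω, ω, ω), (ω, ω, ω, ω))) := by
    rintro _ ⟨_, ⟨s, s', rfl⟩, rfl⟩
    refine ⟨((s, s'), (m, n)), ?_⟩
    simp only [phi4, genMap, Prod.mk.injEq]
    refine ⟨⟨trivial, ?_, ?_, ?_⟩, trivial, ?_, ?_, ?_⟩ <;>
    · rw [← iterZ_add]
      exact iterZ_congr T (by ring) _
  exact closure_mono h2 h1

lemma phi4_prox_eq (hRPS : ∀ a b : X, RP2S T a b → a = b)
    (P Q : (X × X × X × X) × X × X × X × X)
    (h : ∀ ε > 0, ∃ g, dist (phi4 T g P) (phi4 T g Q) < ε) : P = Q := by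
  have key : ∀ (e : ((ℤ × ℤ) × ℤ × ℤ) → ℤ)
      (π : (X × X × X × X) × X × X × X × X → X),
      (∀ g R, π (phi4 T g R) = iterZ T (e g) (π R)) →
      (∀ R S : (X × X × X × X) × X × X × X × X, dist (π R) (π S) ≤ dist R S) →
      π P = π Q := by
    intro e π hcomm hle
    apply eq_of_prox T hRPS
    intro ε hε
    obtain ⟨g, hg⟩ := h ε hε
    refine ⟨e g, ?_⟩
    have h3 := hle (phi4 T g P) (phi4 T g Q)
    rw [hcomm g P, hcomm g Q] at h3
    exact lt_of_le_of_lt h3 hg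
  have e11 := key (fun g => g.1.1) (fun R => R.1.1) (fun g R => rfl)
    (fun R S => (dfst _ _).trans (dfst _ _))
  have e121 := key (fun g => g.1.1 + g.2.1) (fun R => R.1.2.1) (fun g R => rfl)
    (fun R S => ((dfst _ _).trans (dsnd _ _)).trans (dfst _ _))
  have e1221 := key (fun g => g.1.1 + g.2.2) (fun R => R.1.2.2.1) (fun g R => rfl)
    (fun R S => (((dfst _ _).trans (dsnd _ _)).trans (dsnd _ _)).trans (dfst _ _))
  have e1222 := key (fun g => g.1.1 + g.2.1 + g.2.2) (fun R => R.1.2.2.2) (fun g R => rfl)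
    (fun R S => (((dsnd _ _).trans (dsnd _ _)).trans (dsnd _ _)).trans (dfst _ _))
  have e21 := key (fun g => g.1.2) (fun R => R.2.1) (fun g R => rfl)
    (fun R S => (dfst _ _).trans (dsnd _ _))
  have e221 := key (fun g => g.1.2 + g.2.1) (fun R => R.2.2.1) (fun g R => rfl)
    (fun R S => ((dfst _ _).trans (dsnd _ _)).trans (dsnd _ _))
  have e2221 := key (fun g => g.1.2 + g.2.2) (fun R => R.2.2.2.1) (fun g R => rfl)
    (fun R S => (((dfst _ _).trans (dsnd _ _)).trans (dsnd _ _)).trans (dsnd _ _))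
  have e2222 := key (fun g => g.1.2 + g.2.1 + g.2.2) (fun R => R.2.2.2.2) (fun g R => rfl)
    (fun R S => (((dsnd _ _).trans (dsnd _ _)).trans (dsnd _ _)).trans (dsnd _ _))
  exact Prod.ext_iff.mpr ⟨Prod.ext_iff.mpr ⟨e11, Prod.ext_iff.mpr ⟨e121,
    Prod.ext_iff.mpr ⟨e1221, e1222⟩⟩⟩,
    Prod.ext_iff.mpr ⟨e21, Prod.ext_iff.mpr ⟨e221, Prod.ext_iff.mpr ⟨e2221, e2222⟩⟩⟩⟩

end Main

section MainProof

variable {X : Type*} [MetricSpace X] [CompactSpace X] [Nonempty X] (T : X ≃ₜ X)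

attribute [local instance] Ultrafilter.add Ultrafilter.addSemigroup

lemma rp2_eq (htrans : IsTransitive T) (hRPS : ∀ a b : X, RP2S T a b → a = b)
    (x y : X) (h2 : RP2 T x y) : x = y := by
  obtain ⟨ω, hω⟩ := htrans
  have Hk : ∀ k : ℕ, ∃ x' y' : X, ∃ m n : ℤ,
      dist x' x < 1 / ((k : ℝ) + 1) ∧ dist y' y < 1 / ((k : ℝ) + 1) ∧
      dist (iterZ T m x') (iterZ T m y') < 1 / ((k : ℝ) + 1) ∧
      dist (iterZ T n x') (iterZ T n y') < 1 / ((k : ℝ) + 1) ∧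
      dist (iterZ T (m + n) x') (iterZ T (m + n) y') < 1 / ((k : ℝ) + 1) :=
    fun k => h2 (1 / ((k : ℝ) + 1)) (by positivity)
  choose xs ys ms ns hd1 hd2 hd3 hd4 hd5 using Hk
  have hu0 : ↑(Ultrafilter.of (atTop : Filter ℕ)) ≤ (atTop : Filter ℕ) := Ultrafilter.of_le _
  set u0 : Ultrafilter ℕ := Ultrafilter.of atTop with hu0def
  have tx : Filter.Tendsto xs ↑u0 (𝓝 x) := (tend_of_dist_lt hd1).mono_left hu0
  have ty : Filter.Tendsto ys ↑u0 (𝓝 y) := (tend_of_dist_lt hd2).mono_left hu0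
  set a := ulim u0 (fun k => iterZ T (ms k) (xs k)) with ha
  set b := ulim u0 (fun k => iterZ T (ns k) (xs k)) with hb
  set c := ulim u0 (fun k => iterZ T (ms k + ns k) (xs k)) with hc
  have key' : ∀ es : ℕ → ℤ,
      (∀ k, dist (iterZ T (es k) (xs k)) (iterZ T (es k) (ys k)) < 1 / ((k : ℝ) + 1)) →
      ulim u0 (fun k => iterZ T (es k) (ys k)) = ulim u0 (fun k => iterZ T (es k) (xs k)) := by
    intro es hes
    have h1 : Filter.Tendsto (fun k => dist (iterZ T (es k) (xs k)) (iterZ T (es k) (ys k))) ↑u0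
        (𝓝 (dist (ulim u0 (fun k => iterZ T (es k) (xs k)))
          (ulim u0 (fun k => iterZ T (es k) (ys k))))) :=
      (continuous_dist.tendsto _).comp ((tendsto_ulim _ _).prodMk_nhds (tendsto_ulim _ _))
    have h2' : Filter.Tendsto (fun k => dist (iterZ T (es k) (xs k)) (iterZ T (es k) (ys k)))
        ↑u0 (𝓝 0) :=
      (squeeze_zero (fun k => dist_nonneg) (fun k => (hes k).le)
        tendsto_one_div_add_atTop_nhds_zero_nat).mono_left hu0
    exact (dist_eq_zero.mp (tendsto_nhds_unique h1 h2')).symm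
  have tya : Filter.Tendsto (fun k => iterZ T (ms k) (ys k)) ↑u0 (𝓝 a) := by
    have h0 := tendsto_ulim u0 (fun k => iterZ T (ms k) (ys k))
    rwa [key' ms hd3, ← ha] at h0
  have tyb : Filter.Tendsto (fun k => iterZ T (ns k) (ys k)) ↑u0 (𝓝 b) := by
    have h0 := tendsto_ulim u0 (fun k => iterZ T (ns k) (ys k))
    rwa [key' ns hd4, ← hb] at h0
  have tyc : Filter.Tendsto (fun k => iterZ T (ms k + ns k) (ys k)) ↑u0 (𝓝 c) := by
    have h0 := tendsto_ulim u0 (fun k => iterZ T (ms k + ns k) (ys k))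
    rwa [key' (fun k => ms k + ns k) hd5, ← hc] at h0
  -- limit parallelogram pairs
  have hWt : Filter.Tendsto (fun k => (((xs k, iterZ T (ms k) (xs k), iterZ T (ns k) (xs k),
      iterZ T (ms k + ns k) (xs k)), (ys k, iterZ T (ms k) (ys k), iterZ T (ns k) (ys k),
      iterZ T (ms k + ns k) (ys k))) : (X × X × X × X) × X × X × X × X)) ↑u0
      (𝓝 ((x, a, b, c), (y, a, b, c))) :=
    Filter.Tendsto.prodMk_nhds (Filter.Tendsto.prodMk_nhds tx
      (Filter.Tendsto.prodMk_nhds (tendsto_ulim _ _)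
        (Filter.Tendsto.prodMk_nhds (tendsto_ulim _ _) (tendsto_ulim _ _))))
      (Filter.Tendsto.prodMk_nhds ty (Filter.Tendsto.prodMk_nhds tya
        (Filter.Tendsto.prodMk_nhds tyb tyc)))
  have hVt : Filter.Tendsto (fun k => (((xs k, iterZ T (ms k) (xs k), iterZ T (ns k) (xs k),
      iterZ T (ms k + ns k) (xs k)), (xs k, iterZ T (ms k) (xs k), iterZ T (ns k) (xs k),
      iterZ T (ms k + ns k) (xs k))) : (X × X × X × X) × X × X × X × X)) ↑u0
      (𝓝 ((x, a, b, c), (x, a, b, c))) :=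
    Filter.Tendsto.prodMk_nhds (Filter.Tendsto.prodMk_nhds tx
      (Filter.Tendsto.prodMk_nhds (tendsto_ulim _ _)
        (Filter.Tendsto.prodMk_nhds (tendsto_ulim _ _) (tendsto_ulim _ _))))
      (Filter.Tendsto.prodMk_nhds tx (Filter.Tendsto.prodMk_nhds (tendsto_ulim _ _)
        (Filter.Tendsto.prodMk_nhds (tendsto_ulim _ _) (tendsto_ulim _ _))))
  have hWNN : (((x, a, b, c), (y, a, b, c)) : (X × X × X × X) × X × X × X × X) ∈
      closure (genN T) :=
    isClosed_closure.mem_of_tendsto hWt (Filter.Eventually.of_forall fun k =>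
      subset_closure ⟨xs k, ys k, ms k, ns k, rfl⟩)
  have hVNN : (((x, a, b, c), (x, a, b, c)) : (X × X × X × X) × X × X × X × X) ∈
      closure (genN T) :=
    isClosed_closure.mem_of_tendsto hVt (Filter.Eventually.of_forall fun k =>
      subset_closure ⟨xs k, xs k, ms k, ns k, rfl⟩)
  -- minimality transfer
  have horb : closure (genN T) = closure (Set.range fun g => phi4 T g
      ((((ω, ω, ω, ω), (ω, ω, ω, ω))) : (X × X × X × X) × X × X × X × X)) := by
    apply subset_antisymm
    · exact closure_minimal (genN_sub_orbit T hω) isClosed_closure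
    · apply closure_mono
      rintro _ ⟨g, rfl⟩
      exact phi4_mem_genN T g ⟨ω, ω, 0, 0, by simp [iterZ_zero]⟩
  have hWorb : (((x, a, b, c), (y, a, b, c)) : (X × X × X × X) × X × X × X × X) ∈
      closure (Set.range fun g => phi4 T g (((ω, ω, ω, ω), (ω, ω, ω, ω)))) := by
    rw [← horb]; exact hWNN
  have hback := lemmaM (phi4 T) (phi4_cont T) (phi4_add T) (phi4_zero T)
    (phi4_prox_eq T hRPS) hWorb
  have hNNsub : closure (genN T) ⊆ closure (Set.range fun g =>
      phi4 T g ((((x, a, b, c), (y, a, b, c))) : (X × X × X × X) × X × X × X × X)) := by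
    rw [horb]
    apply closure_minimal ?_ isClosed_closure
    rintro _ ⟨g, rfl⟩
    exact orbit_closure_inv (phi4 T) (phi4_cont T) (phi4_add T) _ g _ hback
  have hYN : ((((y, y, y, y), (y, y, y, y))) : (X × X × X × X) × X × X × X × X) ∈
      closure (genN T) :=
    subset_closure ⟨y, y, 0, 0, by simp [iterZ_zero]⟩
  obtain ⟨r, hr⟩ := exists_ultrafilter_tendsto (hNNsub hYN)
  set xstar := ulim r (fun g : (ℤ × ℤ) × ℤ × ℤ => iterZ T g.1.2 x) with hxs
  -- component limits of hr
  have h11 : Filter.Tendsto (fun g : (ℤ × ℤ) × ℤ × ℤ => iterZ T g.1.1 x) ↑r (𝓝 y) :=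
    ((continuous_fst.comp continuous_fst).tendsto _).comp hr
  have h121 : Filter.Tendsto (fun g : (ℤ × ℤ) × ℤ × ℤ => iterZ T (g.1.1 + g.2.1) a) ↑r (𝓝 y) :=
    ((continuous_fst.comp (continuous_snd.comp continuous_fst)).tendsto _).comp hr
  have h1221 : Filter.Tendsto (fun g : (ℤ × ℤ) × ℤ × ℤ => iterZ T (g.1.1 + g.2.2) b) ↑r (𝓝 y) :=
    ((continuous_fst.comp (continuous_snd.comp (continuous_snd.comp
      continuous_fst))).tendsto _).comp hr
  have h1222 : Filter.Tendsto (fun g : (ℤ × ℤ) × ℤ × ℤ =>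
      iterZ T (g.1.1 + g.2.1 + g.2.2) c) ↑r (𝓝 y) :=
    ((continuous_snd.comp (continuous_snd.comp (continuous_snd.comp
      continuous_fst))).tendsto _).comp hr
  have h21 : Filter.Tendsto (fun g : (ℤ × ℤ) × ℤ × ℤ => iterZ T g.1.2 y) ↑r (𝓝 y) :=
    ((continuous_fst.comp continuous_snd).tendsto _).comp hr
  have h221 : Filter.Tendsto (fun g : (ℤ × ℤ) × ℤ × ℤ => iterZ T (g.1.2 + g.2.1) a) ↑r (𝓝 y) :=
    ((continuous_fst.comp (continuous_snd.comp continuous_snd)).tendsto _).comp hr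
  have h2221 : Filter.Tendsto (fun g : (ℤ × ℤ) × ℤ × ℤ => iterZ T (g.1.2 + g.2.2) b) ↑r (𝓝 y) :=
    ((continuous_fst.comp (continuous_snd.comp (continuous_snd.comp
      continuous_snd))).tendsto _).comp hr
  have h2222 : Filter.Tendsto (fun g : (ℤ × ℤ) × ℤ × ℤ =>
      iterZ T (g.1.2 + g.2.1 + g.2.2) c) ↑r (𝓝 y) :=
    ((continuous_snd.comp (continuous_snd.comp (continuous_snd.comp
      continuous_snd))).tendsto _).comp hr
  -- limit of the V-orbit
  have hZt : Filter.Tendsto (fun g => phi4 T g (((x, a, b, c), (x, a, b, c)))) ↑r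
      (𝓝 ((y, y, y, y), (xstar, y, y, y))) :=
    Filter.Tendsto.prodMk_nhds (Filter.Tendsto.prodMk_nhds h11
      (Filter.Tendsto.prodMk_nhds h121 (Filter.Tendsto.prodMk_nhds h1221 h1222)))
      (Filter.Tendsto.prodMk_nhds (tendsto_ulim _ _)
        (Filter.Tendsto.prodMk_nhds h221 (Filter.Tendsto.prodMk_nhds h2221 h2222)))
  have hZNN : (((y, y, y, y), (xstar, y, y, y)) : (X × X × X × X) × X × X × X × X) ∈
      closure (genN T) :=
    isClosed_closure.mem_of_tendsto hZt (Filter.Eventually.of_forall fun g =>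
      mem_NN_inv T g hVNN)
  -- xstar is strongly doubly regionally proximal to y
  have hrs : RP2S T xstar y := by
    intro ε hε
    obtain ⟨b0, hb0, hdb⟩ := Metric.mem_closure_iff.mp hZNN ε hε
    obtain ⟨z, w, m, n, rfl⟩ := hb0
    simp only [Prod.dist_eq, max_lt_iff] at hdb
    obtain ⟨⟨q1, q2, q3, q4⟩, q5, q6, q7, q8⟩ := hdb
    exact ⟨w, z, m, n, by rw [dist_comm]; exact q5, by rw [dist_comm]; exact q1,
      by rw [dist_comm]; exact q6, by rw [dist_comm]; exact q7, by rw [dist_comm]; exact q8,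
      by rw [dist_comm]; exact q2, by rw [dist_comm]; exact q3, by rw [dist_comm]; exact q4⟩
  have hxy : xstar = y := hRPS _ _ hrs
  -- conclude proximality of x and y
  apply eq_of_prox T hRPS
  intro ε hε
  have S1 : {g : (ℤ × ℤ) × ℤ × ℤ | dist (iterZ T g.1.2 x) xstar < ε / 2} ∈ r := by
    have h0 := (tendsto_ulim r (fun g : (ℤ × ℤ) × ℤ × ℤ => iterZ T g.1.2 x))
      (Metric.ball_mem_nhds _ (half_pos hε))
    exact h0
  have S2 : {g : (ℤ × ℤ) × ℤ × ℤ | dist (iterZ T g.1.2 y) y < ε / 2} ∈ r := by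
    have h0 := h21 (Metric.ball_mem_nhds _ (half_pos hε))
    exact h0
  obtain ⟨g, hg1, hg2⟩ := Ultrafilter.nonempty_of_mem (Filter.inter_mem S1 S2)
  refine ⟨g.1.2, ?_⟩
  have hg1' : dist (iterZ T g.1.2 x) y < ε / 2 := by rwa [hxy] at hg1
  calc dist (iterZ T g.1.2 x) (iterZ T g.1.2 y)
      ≤ dist (iterZ T g.1.2 x) y + dist (iterZ T g.1.2 y) y := dist_triangle_right _ _ _
    _ < ε / 2 + ε / 2 := add_lt_add hg1' hg2
    _ = ε := by ring

lemma rp2_refl (x : X) : RP2 T x x := fun ε hε =>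
  ⟨x, x, 0, 0, by simpa using hε, by simpa using hε, by simpa using hε,
    by simpa using hε, by simpa using hε⟩

lemma rp2s_refl (x : X) : RP2S T x x := fun ε hε =>
  ⟨x, x, 0, 0, by simpa using hε, by simpa using hε, by simpa [iterZ_zero] using hε,
    by simpa [iterZ_zero] using hε, by simpa [iterZ_zero] using hε,
    by simpa [iterZ_zero] using hε, by simpa [iterZ_zero] using hε,
    by simpa [iterZ_zero] using hε⟩

lemma rp2_of_rp2s {x y : X} (h : RP2S T x y) : RP2 T x y := by
  intro ε hε
  obtain ⟨x', y', m, n, h1, h2, h3, h4, h5, h6, h7, h8⟩ := h (ε / 2) (half_pos hε)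
  refine ⟨x', y', m, n, lt_of_lt_of_le h1 (by linarith), lt_of_lt_of_le h2 (by linarith),
    ?_, ?_, ?_⟩
  · calc dist (iterZ T m x') (iterZ T m y')
        ≤ dist (iterZ T m x') y + dist (iterZ T m y') y := dist_triangle_right _ _ _
      _ < ε / 2 + ε / 2 := add_lt_add h3 h6
      _ = ε := by ring
  · calc dist (iterZ T n x') (iterZ T n y')
        ≤ dist (iterZ T n x') y + dist (iterZ T n y') y := dist_triangle_right _ _ _
      _ < ε / 2 + ε / 2 := add_lt_add h4 h7
      _ = ε := by ring
  · calc dist (iterZ T (m + n) x') (iterZ T (m + n) y')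
        ≤ dist (iterZ T (m + n) x') y + dist (iterZ T (m + n) y') y := dist_triangle_right _ _ _
      _ < ε / 2 + ε / 2 := add_lt_add h5 h8
      _ = ε := by ring

end MainProof

/-- For a transitive system, `RP²ₛ` is the equality relation iff `RP²` is. -/
theorem stmt0 {X : Type*} [MetricSpace X] [CompactSpace X] [Nonempty X]
    (T : X ≃ₜ X) (htrans : IsTransitive T) :
    (∀ x y : X, RP2S T x y ↔ x = y) ↔ (∀ x y : X, RP2 T x y ↔ x = y) := by
  constructor
  · intro hS x y
    constructor
    · intro h2
      exact rp2_eq T htrans (fun a b hab => (hS a b).mp hab) x y h2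
    · rintro rfl
      exact rp2_refl T x
  · intro h2 x y
    constructor
    · intro hs
      exact (h2 x y).mp (rp2_of_rp2s T hs)
    · rintro rfl
      exact rp2s_refl T x
end

section
/- Let (X,T) be a transitive topological dynamical system and let x,y ∈ X. Then: (1) (x,y) ∈ RP if and only if there exists a ∈ X with (x,y,a,a) ∈ 𝒫; (2) (x,y) ∈ RP² if and only if there exist a,b,c ∈ X with (x,y,a,a,b,b,c,c) ∈ 𝒬; (3) (x,y) ∈ RP²ₛ if and only if (x,y,y,y,y,y,y,y) ∈ 𝒬. -/
open Filter Topology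

namespace Stmt2Aux

variable {X : Type*}

theorem iterZ_add [TopologicalSpace X] (T : X ≃ₜ X) (m k : ℤ) (x : X) :
    iterZ T (m + k) x = iterZ T m (iterZ T k x) := by
  simp [iterZ, zpow_add, Equiv.Perm.mul_apply]

theorem iterZ_comp [TopologicalSpace X] (T : X ≃ₜ X) (m k : ℤ) (x : X) :
    iterZ T m (iterZ T k x) = iterZ T (m + k) x := (iterZ_add T m k x).symm

theorem iterZ_comp' [TopologicalSpace X] (T : X ≃ₜ X) {a b c : ℤ} (h : a + b = c) (x : X) :
    iterZ T a (iterZ T b x) = iterZ T c x := by rw [iterZ_comp, h]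

theorem continuous_iterZ [TopologicalSpace X] (T : X ≃ₜ X) (n : ℤ) : Continuous (iterZ T n) := by
  induction n using Int.induction_on with
  | zero => simpa [show iterZ T 0 = id from funext fun x => by simp [iterZ]] using continuous_id
  | succ n ih =>
      have h : iterZ T ((n : ℤ) + 1) = fun x => T (iterZ T (n : ℤ) x) := by
        funext x
        rw [add_comm, iterZ_add]
        simp [iterZ]
      rw [h]
      exact T.continuous.comp ih
  | pred n ih =>
      have h : iterZ T (-(n : ℤ) - 1) = fun x => T.symm (iterZ T (-(n : ℤ)) x) := by
        funext x
        have e : (-(n : ℤ) - 1) = (-1) + (-(n : ℤ)) := by ring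
        rw [e, iterZ_add]
        simp only [iterZ, zpow_neg_one, zpow_neg, zpow_natCast]
        rfl
      rw [h]
      exact T.symm.continuous.comp ih

theorem exists_mod [MetricSpace X] [CompactSpace X] (T : X ≃ₜ X) (n : ℤ) {ε : ℝ} (hε : 0 < ε) :
    ∃ δ > 0, ∀ a b : X, dist a b < δ → dist (iterZ T n a) (iterZ T n b) < ε := by
  have h := CompactSpace.uniformContinuous_of_continuous (continuous_iterZ T n)
  rw [Metric.uniformContinuous_iff] at h
  exact h ε hε

theorem exists_mod3 [MetricSpace X] [CompactSpace X] (T : X ≃ₜ X) (m n : ℤ) {ε : ℝ}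
    (hε : 0 < ε) :
    ∃ δ > 0, δ ≤ ε ∧ ∀ a b : X, dist a b < δ →
      dist (iterZ T m a) (iterZ T m b) < ε ∧ dist (iterZ T n a) (iterZ T n b) < ε ∧
      dist (iterZ T (m + n) a) (iterZ T (m + n) b) < ε := by
  obtain ⟨δ₁, h₁0, h₁⟩ := exists_mod T m hε
  obtain ⟨δ₂, h₂0, h₂⟩ := exists_mod T n hε
  obtain ⟨δ₃, h₃0, h₃⟩ := exists_mod T (m + n) hε
  refine ⟨min (min δ₁ δ₂) (min δ₃ ε), by positivity, le_trans (min_le_right _ _) (min_le_right _ _), ?_⟩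
  intro a b hab
  exact ⟨h₁ a b (hab.trans_le (le_trans (min_le_left _ _) (min_le_left _ _))),
         h₂ a b (hab.trans_le (le_trans (min_le_left _ _) (min_le_right _ _))),
         h₃ a b (hab.trans_le (le_trans (min_le_right _ _) (min_le_left _ _)))⟩

theorem exists_orbit_near [MetricSpace X] (T : X ≃ₜ X) {w : X}
    (hw : Dense (Set.range fun n : ℤ => iterZ T n w)) (u : X) {δ : ℝ} (hδ : 0 < δ) :
    ∃ k : ℤ, dist (iterZ T k w) u < δ := by
  have hw' : DenseRange (fun n : ℤ => iterZ T n w) := hw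
  obtain ⟨k, hk⟩ := hw'.exists_dist_lt u hδ
  exact ⟨k, by rwa [dist_comm]⟩

theorem exists_orbit_near' [MetricSpace X] (T : X ≃ₜ X) {w : X}
    (hw : Dense (Set.range fun n : ℤ => iterZ T n w)) (k : ℤ) (u : X) {δ : ℝ} (hδ : 0 < δ) :
    ∃ M : ℤ, dist (iterZ T M (iterZ T k w)) u < δ := by
  obtain ⟨j, hj⟩ := exists_orbit_near T hw u hδ
  refine ⟨j - k, ?_⟩
  have e : j - k + k = j := by ring
  rw [iterZ_comp, e]
  exact hj

theorem key {Y : Type*} [MetricSpace Y] [CompactSpace Y] {S : Set Y} {F : Y → ℝ}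
    (hF : Continuous F) (h : ∀ ε > 0, ∃ q ∈ S, F q < ε) :
    ∃ L ∈ closure S, F L ≤ 0 := by
  have h' : ∀ k : ℕ, ∃ q ∈ S, F q < 1 / ((k : ℝ) + 1) := fun k => h _ (by positivity)
  choose q hqS hqF using h'
  obtain ⟨L, -, φ, hφ, hL⟩ := isCompact_univ.tendsto_subseq (fun k => Set.mem_univ (q k))
  refine ⟨L, mem_closure_of_tendsto hL (Filter.Eventually.of_forall fun k => hqS (φ k)), ?_⟩
  have h1 : Tendsto (fun k => F (q (φ k))) atTop (𝓝 (F L)) := (hF.tendsto L).comp hL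
  have h2 : Tendsto (fun k : ℕ => 1 / ((k : ℝ) + 1)) atTop (𝓝 0) :=
    tendsto_one_div_add_atTop_nhds_zero_nat
  refine le_of_tendsto_of_tendsto' h1 h2 fun k => ?_
  calc F (q (φ k)) ≤ 1 / ((φ k : ℝ) + 1) := (hqF (φ k)).le
    _ ≤ 1 / ((k : ℝ) + 1) := by
        apply one_div_le_one_div_of_le (by positivity)
        have hk : k ≤ φ k := hφ.le_apply
        exact add_le_add_left (Nat.cast_le.mpr hk) 1

theorem dist4_lt_iff [MetricSpace X] {p q : X × X × X × X} {ε : ℝ} :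
    dist p q < ε ↔ dist p.1 q.1 < ε ∧ dist p.2.1 q.2.1 < ε ∧
      dist p.2.2.1 q.2.2.1 < ε ∧ dist p.2.2.2 q.2.2.2 < ε := by
  simp only [Prod.dist_eq, max_lt_iff]

theorem dist8_lt_iff [MetricSpace X] {p q : (X × X × X × X) × (X × X × X × X)} {ε : ℝ} :
    dist p q < ε ↔ dist p.1.1 q.1.1 < ε ∧ dist p.1.2.1 q.1.2.1 < ε ∧
      dist p.1.2.2.1 q.1.2.2.1 < ε ∧ dist p.1.2.2.2 q.1.2.2.2 < ε ∧
      dist p.2.1 q.2.1 < ε ∧ dist p.2.2.1 q.2.2.1 < ε ∧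
      dist p.2.2.2.1 q.2.2.2.1 < ε ∧ dist p.2.2.2.2 q.2.2.2.2 < ε := by
  simp only [Prod.dist_eq, max_lt_iff, and_assoc]

end Stmt2Aux

open Stmt2Aux in
/-- Characterization of `RP`, `RP²`, `RP²ₛ` via parallelograms and parallelepipeds. -/
theorem stmt2 {X : Type*} [MetricSpace X] [CompactSpace X] [Nonempty X]
    (T : X ≃ₜ X) (htrans : IsTransitive T) (x y : X) :
    (RP T x y ↔ ∃ a : X, (x, y, a, a) ∈ Para T) ∧
    (RP2 T x y ↔ ∃ a b c : X, ((x, y, a, a), (b, b, c, c)) ∈ Pip T) ∧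
    (RP2S T x y ↔ ((x, y, y, y), (y, y, y, y)) ∈ Pip T) := by
  obtain ⟨w, hw⟩ := htrans
  refine ⟨⟨?_, ?_⟩, ⟨?_, ?_⟩, ?_, ?_⟩
  · -- RP → ∃ a, (x,y,a,a) ∈ Para T
    intro hRP
    have happrox : ∀ ε > 0, ∃ q ∈ {q : X × X × X × X |
        ∃ (z : X) (m n : ℤ), q = (z, iterZ T m z, iterZ T n z, iterZ T (m + n) z)},
        (fun q : X × X × X × X =>
          max (max (dist q.1 x) (dist q.2.1 y)) (dist q.2.2.1 q.2.2.2)) q < ε := by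
      intro ε hε
      have hδ : (0 : ℝ) < ε / 3 := by positivity
      obtain ⟨x', y', n, hx', hy', hxy⟩ := hRP (ε / 3) hδ
      obtain ⟨η, hη0, hmod⟩ := exists_mod T n hδ
      have hη'0 : (0 : ℝ) < min η (ε / 3) := lt_min hη0 hδ
      obtain ⟨k, hk⟩ := exists_orbit_near T hw x' hη'0
      obtain ⟨M, hM⟩ := exists_orbit_near' T hw k y' hη'0
      set z := iterZ T k w with hzdef
      refine ⟨(z, iterZ T M z, iterZ T n z, iterZ T (M + n) z), ⟨z, M, n, rfl⟩, ?_⟩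
      have hkη : dist z x' < η := hk.trans_le (min_le_left _ _)
      have hMη : dist (iterZ T M z) y' < η := hM.trans_le (min_le_left _ _)
      have b1 : dist z x < ε := by
        have := dist_triangle z x' x
        have h := hk.trans_le (min_le_right _ _)
        linarith
      have b2 : dist (iterZ T M z) y < ε := by
        have := dist_triangle (iterZ T M z) y' y
        have h := hM.trans_le (min_le_right _ _)
        linarith
      have hMn : iterZ T (M + n) z = iterZ T n (iterZ T M z) :=
        (iterZ_comp' T (show n + M = M + n by ring) z).symm
      have t1 : dist (iterZ T n z) (iterZ T n x') < ε / 3 := hmod z x' hkη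
      have t2 : dist (iterZ T n (iterZ T M z)) (iterZ T n y') < ε / 3 := hmod _ _ hMη
      have b3 : dist (iterZ T n z) (iterZ T (M + n) z) < ε := by
        rw [hMn]
        have := dist_triangle4 (iterZ T n z) (iterZ T n x') (iterZ T n y')
          (iterZ T n (iterZ T M z))
        have t2' : dist (iterZ T n y') (iterZ T n (iterZ T M z)) < ε / 3 := by
          rwa [dist_comm]
        linarith
      exact max_lt (max_lt b1 b2) b3
    obtain ⟨L, hLmem, hLF⟩ := key (by fun_prop) happrox
    obtain ⟨l1, l2, l3, l4⟩ := L
    simp only [max_le_iff] at hLF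
    obtain ⟨⟨h1, h2⟩, h3⟩ := hLF
    have e1 : l1 = x := dist_le_zero.mp h1
    have e2 : l2 = y := dist_le_zero.mp h2
    have e3 : l3 = l4 := dist_le_zero.mp h3
    subst e1; subst e2; subst e3
    exact ⟨l3, hLmem⟩
  · -- ∃ a → RP
    rintro ⟨a, ha⟩ ε hε
    obtain ⟨q, hqS, hq⟩ := Metric.mem_closure_iff.mp ha (ε / 2) (by positivity)
    obtain ⟨z, m, n, rfl⟩ := hqS
    simp only [dist4_lt_iff] at hq
    obtain ⟨d1, d2, d3, d4⟩ := hq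
    refine ⟨z, iterZ T m z, n, by rw [dist_comm] at d1; linarith, ?_, ?_⟩
    · rw [dist_comm] at d2; linarith
    · have e : iterZ T n (iterZ T m z) = iterZ T (m + n) z :=
        iterZ_comp' T (show n + m = m + n by ring) z
      rw [e]
      have := dist_triangle (iterZ T n z) a (iterZ T (m + n) z)
      rw [dist_comm] at d3
      linarith
  · -- RP2 → ∃ a b c
    intro hRP2
    have happrox : ∀ ε > 0, ∃ q ∈ {q : (X × X × X × X) × (X × X × X × X) |
        ∃ (z : X) (m n p : ℤ),
        q = ((z, iterZ T m z, iterZ T n z, iterZ T (m + n) z),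
             (iterZ T p z, iterZ T (m + p) z, iterZ T (n + p) z, iterZ T (m + n + p) z))},
        (fun q : (X × X × X × X) × (X × X × X × X) =>
          max (max (max (dist q.1.1 x) (dist q.1.2.1 y))
          (max (dist q.1.2.2.1 q.1.2.2.2) (dist q.2.1 q.2.2.1))) (dist q.2.2.2.1 q.2.2.2.2)) q
          < ε := by
      intro ε hε
      have hδ : (0 : ℝ) < ε / 3 := by positivity
      obtain ⟨x', y', m, n, hx', hy', hm, hn, hmn⟩ := hRP2 (ε / 3) hδ
      obtain ⟨η, hη0, hηε, hmod⟩ := exists_mod3 T m n hδ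
      obtain ⟨k, hk⟩ := exists_orbit_near T hw x' hη0
      obtain ⟨M, hM⟩ := exists_orbit_near' T hw k y' hη0
      set z := iterZ T k w with hzdef
      refine ⟨((z, iterZ T M z, iterZ T m z, iterZ T (M + m) z),
          (iterZ T n z, iterZ T (M + n) z, iterZ T (m + n) z, iterZ T (M + m + n) z)),
        ⟨z, M, m, n, rfl⟩, ?_⟩
      have b1 : dist z x < ε := by
        have := dist_triangle z x' x
        linarith
      have b2 : dist (iterZ T M z) y < ε := by
        have := dist_triangle (iterZ T M z) y' y
        linarith
      have step : ∀ j : ℤ,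
          (∀ a b : X, dist a b < η → dist (iterZ T j a) (iterZ T j b) < ε / 3) →
          dist (iterZ T j x') (iterZ T j y') < ε / 3 →
          dist (iterZ T j z) (iterZ T (M + j) z) < ε := by
        intro j hj hxyj
        have hMj : iterZ T (M + j) z = iterZ T j (iterZ T M z) :=
          (iterZ_comp' T (show j + M = M + j by ring) z).symm
        rw [hMj]
        have t1 := hj z x' hk
        have t2 := hj (iterZ T M z) y' hM
        have := dist_triangle4 (iterZ T j z) (iterZ T j x') (iterZ T j y')
          (iterZ T j (iterZ T M z))
        rw [dist_comm (iterZ T j (iterZ T M z))] at t2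
        linarith
      have b3 := step m (fun a b h => (hmod a b h).1) hm
      have b4 := step n (fun a b h => (hmod a b h).2.1) hn
      have b5 := step (m + n) (fun a b h => (hmod a b h).2.2) hmn
      have eass : M + (m + n) = M + m + n := by ring
      rw [eass] at b5
      exact max_lt (max_lt (max_lt b1 b2) (max_lt b3 b4)) b5
    obtain ⟨L, hLmem, hLF⟩ := key (by fun_prop) happrox
    obtain ⟨⟨l1, l2, l3, l4⟩, l5, l6, l7, l8⟩ := L
    simp only [max_le_iff] at hLF
    obtain ⟨⟨⟨h1, h2⟩, h3, h4⟩, h5⟩ := hLF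
    have e1 : l1 = x := dist_le_zero.mp h1
    have e2 : l2 = y := dist_le_zero.mp h2
    have e3 : l3 = l4 := dist_le_zero.mp h3
    have e4 : l5 = l6 := dist_le_zero.mp h4
    have e5 : l7 = l8 := dist_le_zero.mp h5
    subst e1; subst e2; subst e3; subst e4; subst e5
    exact ⟨l3, l5, l7, hLmem⟩
  · -- ∃ a b c → RP2
    rintro ⟨a, b, c, h⟩ ε hε
    obtain ⟨q, hqS, hq⟩ := Metric.mem_closure_iff.mp h (ε / 2) (by positivity)
    obtain ⟨z, m, n, p, rfl⟩ := hqS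
    simp only [dist8_lt_iff] at hq
    obtain ⟨d1, d2, d3, d4, d5, d6, d7, d8⟩ := hq
    refine ⟨z, iterZ T m z, n, p, by rw [dist_comm] at d1; linarith,
      by rw [dist_comm] at d2; linarith, ?_, ?_, ?_⟩
    · have e : iterZ T n (iterZ T m z) = iterZ T (m + n) z :=
        iterZ_comp' T (show n + m = m + n by ring) z
      rw [e]
      have := dist_triangle (iterZ T n z) a (iterZ T (m + n) z)
      rw [dist_comm] at d3
      linarith
    · have e : iterZ T p (iterZ T m z) = iterZ T (m + p) z :=
        iterZ_comp' T (show p + m = m + p by ring) z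
      rw [e]
      have := dist_triangle (iterZ T p z) b (iterZ T (m + p) z)
      rw [dist_comm] at d5
      linarith
    · have e : iterZ T (n + p) (iterZ T m z) = iterZ T (m + n + p) z :=
        iterZ_comp' T (show n + p + m = m + n + p by ring) z
      rw [e]
      have := dist_triangle (iterZ T (n + p) z) c (iterZ T (m + n + p) z)
      rw [dist_comm] at d7
      linarith
  · -- RP2S → mem
    intro hS
    show _ ∈ Pip T
    rw [Pip, Metric.mem_closure_iff]
    intro ε hε
    have hδ : (0 : ℝ) < ε / 2 := by positivity
    obtain ⟨x', y', m, n, hx', hy', c1, c2, c3, c4, c5, c6⟩ := hS (ε / 2) hδ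
    obtain ⟨η, hη0, hηε, hmod⟩ := exists_mod3 T m n hδ
    obtain ⟨k, hk⟩ := exists_orbit_near T hw x' hη0
    obtain ⟨M, hM⟩ := exists_orbit_near' T hw k y' hη0
    set z := iterZ T k w with hzdef
    refine ⟨((z, iterZ T M z, iterZ T m z, iterZ T (M + m) z),
        (iterZ T n z, iterZ T (M + n) z, iterZ T (m + n) z, iterZ T (M + m + n) z)),
      ⟨z, M, m, n, rfl⟩, ?_⟩
    simp only [dist8_lt_iff]
    have stepA : ∀ j : ℤ,
        (∀ a b : X, dist a b < η → dist (iterZ T j a) (iterZ T j b) < ε / 2) →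
        dist (iterZ T j x') y < ε / 2 → dist y (iterZ T j z) < ε := by
      intro j hj hc
      have t1 := hj z x' hk
      have := dist_triangle y (iterZ T j x') (iterZ T j z)
      rw [dist_comm] at hc
      rw [dist_comm (iterZ T j z)] at t1
      linarith
    have stepB : ∀ j : ℤ,
        (∀ a b : X, dist a b < η → dist (iterZ T j a) (iterZ T j b) < ε / 2) →
        dist (iterZ T j y') y < ε / 2 → dist y (iterZ T (M + j) z) < ε := by
      intro j hj hc
      have hMj : iterZ T (M + j) z = iterZ T j (iterZ T M z) :=
        (iterZ_comp' T (show j + M = M + j by ring) z).symm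
      rw [hMj]
      have t1 := hj (iterZ T M z) y' hM
      have := dist_triangle y (iterZ T j y') (iterZ T j (iterZ T M z))
      rw [dist_comm] at hc
      rw [dist_comm (iterZ T j (iterZ T M z))] at t1
      linarith
    refine ⟨?_, ?_, ?_, ?_, ?_, ?_, ?_, ?_⟩
    · have t := dist_triangle x x' z
      have h1 : dist x x' < ε / 2 := by rw [dist_comm]; exact hx'
      have h2 : dist x' z < η := by rw [dist_comm]; exact hk
      linarith
    · have t := dist_triangle y y' (iterZ T M z)
      have h1 : dist y y' < ε / 2 := by rw [dist_comm]; exact hy'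
      have h2 : dist y' (iterZ T M z) < η := by rw [dist_comm]; exact hM
      linarith
    · exact stepA m (fun a b h => (hmod a b h).1) c1
    · exact stepB m (fun a b h => (hmod a b h).1) c4
    · exact stepA n (fun a b h => (hmod a b h).2.1) c2
    · exact stepB n (fun a b h => (hmod a b h).2.1) c5
    · exact stepA (m + n) (fun a b h => (hmod a b h).2.2) c3
    · have h := stepB (m + n) (fun a b h => (hmod a b h).2.2) c6
      have eass : M + (m + n) = M + m + n := by ring
      rwa [eass] at h
  · -- mem → RP2S
    intro h ε hε
    obtain ⟨q, hqS, hq⟩ := Metric.mem_closure_iff.mp h ε hε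
    obtain ⟨z, m, n, p, rfl⟩ := hqS
    simp only [dist8_lt_iff] at hq
    obtain ⟨d1, d2, d3, d4, d5, d6, d7, d8⟩ := hq
    refine ⟨z, iterZ T m z, n, p, by rwa [dist_comm] at d1, by rwa [dist_comm] at d2,
      by rwa [dist_comm] at d3, by rwa [dist_comm] at d5, by rwa [dist_comm] at d7, ?_, ?_, ?_⟩
    · have e : iterZ T n (iterZ T m z) = iterZ T (m + n) z :=
        iterZ_comp' T (show n + m = m + n by ring) z
      rw [e, dist_comm]
      exact d4
    · have e : iterZ T p (iterZ T m z) = iterZ T (m + p) z :=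
        iterZ_comp' T (show p + m = m + p by ring) z
      rw [e, dist_comm]
      exact d6
    · have e : iterZ T (n + p) (iterZ T m z) = iterZ T (m + n + p) z :=
        iterZ_comp' T (show n + p + m = m + n + p by ring) z
      rw [e, dist_comm]
      exact d8
end

section
/- Let (X,T) be a distal minimal topological dynamical system, let x0 ∈ X, and let K ⊆ X⁴ be the closed orbit of (x0,x0,x0,x0) under the transformations T^[2]_1 and T^[2]_2, i.e., the closure of {T^[2]_1^m T^[2]_2^n (x0,x0,x0,x0) : m,n ∈ ℤ}. If (x0,x'_1,x2,x3) ∈ K and (x'_1,x1) ∈ RP, then (x0,x1,x2,x3) ∈ K. -/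
open Filter Topology

section Acts

variable {X : Type*} [TopologicalSpace X]

/-- The `ℤ³`-action on `X⁴` generated by the commuting homeomorphisms
`T^[2] = T×T×T×T`, `T^[2]₁ = id×id×T×T` and `T^[2]₂ = id×T×id×T`:
`act2 T a b c = (T^[2])^a ∘ (T^[2]₁)^b ∘ (T^[2]₂)^c`. -/
def act2 (T : X ≃ₜ X) (a b c : ℤ) (q : X × X × X × X) : X × X × X × X :=
  (iterZ T a q.1, iterZ T (a + c) q.2.1,
   iterZ T (a + b) q.2.2.1, iterZ T (a + b + c) q.2.2.2)

/-- The `ℤ⁴`-action on `X⁸ = X⁴ × X⁴` generated by the commuting homeomorphisms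
`T^[3]`, `T^[3]₁`, `T^[3]₂`, `T^[3]₃`:
`act3 T a b c d = (T^[3])^a ∘ (T^[3]₁)^b ∘ (T^[3]₂)^c ∘ (T^[3]₃)^d`. -/
def act3 (T : X ≃ₜ X) (a b c d : ℤ)
    (q : (X × X × X × X) × (X × X × X × X)) :
    (X × X × X × X) × (X × X × X × X) :=
  (act2 T a c d q.1, act2 T (a + b) c d q.2)

end Acts


namespace Stmt11Aux

section IterZ

variable {X : Type*} [TopologicalSpace X]

lemma iterZ_add (T : X ≃ₜ X) (a b : ℤ) (x : X) :
    iterZ T (a + b) x = iterZ T a (iterZ T b x) := by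
  simp only [iterZ, zpow_add]
  rfl

lemma iterZ_zero (T : X ≃ₜ X) (x : X) : iterZ T 0 x = x := rfl

private lemma continuous_pow_apply (T : X ≃ₜ X) (k : ℕ) :
    Continuous fun x => (T.toEquiv ^ k) x := by
  induction k with
  | zero => simpa using continuous_id'
  | succ k ih =>
    have h : ∀ x : X, (T.toEquiv ^ (k + 1)) x = (T.toEquiv ^ k) (T x) := by
      intro x
      rw [pow_succ]
      rfl
    simpa only [h, Function.comp_def] using ih.comp T.continuous

lemma continuous_iterZ (T : X ≃ₜ X) (n : ℤ) : Continuous (iterZ T n) := by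
  cases n with
  | ofNat k =>
    have : iterZ T (Int.ofNat k) = fun x => (T.toEquiv ^ k) x := by
      funext x
      simp [iterZ, zpow_natCast]
    rw [this]
    exact continuous_pow_apply T k
  | negSucc k =>
    have : iterZ T (Int.negSucc k) = fun x => (T.symm.toEquiv ^ (k + 1)) x := by
      funext x
      have h1 : (T.toEquiv)⁻¹ = T.symm.toEquiv := rfl
      simp only [iterZ, zpow_negSucc, ← inv_pow, h1]
    rw [this]
    exact continuous_pow_apply T.symm (k + 1)

end IterZ

section Ellis

variable {Z : Type*} [MetricSpace Z] [CompactSpace Z]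

lemma comp_mem_closure {S : Set (Z → Z)} (hcont : ∀ f ∈ S, Continuous f)
    (hcomp : ∀ f ∈ S, ∀ g ∈ S, f ∘ g ∈ S) {p q : Z → Z}
    (hp : p ∈ closure S) (hq : q ∈ closure S) : p ∘ q ∈ closure S := by
  have h1 : ∀ s ∈ S, s ∘ q ∈ closure S := by
    intro s hs
    have hcs : Continuous fun f : Z → Z => s ∘ f :=
      continuous_pi fun z => (hcont s hs).comp (continuous_apply z)
    have hmem : s ∘ q ∈ (fun f : Z → Z => s ∘ f) '' closure S := ⟨q, hq, rfl⟩
    have h2 := image_closure_subset_closure_image hcs (s := S) hmem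
    refine closure_minimal ?_ isClosed_closure h2
    rintro _ ⟨g, hg, rfl⟩
    exact subset_closure (hcomp s hs g hg)
  have h2 : Continuous fun f : Z → Z => f ∘ q :=
    continuous_pi fun z => continuous_apply (q z)
  have hmem : p ∘ q ∈ (fun f : Z → Z => f ∘ q) '' closure S := ⟨p, hp, rfl⟩
  have h3 := image_closure_subset_closure_image h2 (s := S) hmem
  refine closure_minimal ?_ isClosed_closure h3
  rintro _ ⟨s, hs, rfl⟩
  exact h1 s hs

lemma injective_of_mem_closure {S : Set (Z → Z)}
    (hdist : ∀ z z' : Z, z ≠ z' → ∃ c > 0, ∀ f ∈ S, c ≤ dist (f z) (f z'))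
    {p : Z → Z} (hp : p ∈ closure S) : Function.Injective p := by
  intro z z' hzz
  by_contra hne
  obtain ⟨c, hc, hbd⟩ := hdist z z' hne
  have hcl : IsClosed {f : Z → Z | c ≤ dist (f z) (f z')} :=
    isClosed_le continuous_const ((continuous_apply z).dist (continuous_apply z'))
  have h := closure_minimal (fun f hf => hbd f hf) hcl hp
  have h2 : c ≤ dist (p z) (p z') := h
  rw [hzz, dist_self] at h2
  linarith

lemma exists_idem (C : Set (Z → Z)) (hne : C.Nonempty) (hcpt : IsCompact C)
    (hcomp : ∀ f ∈ C, ∀ g ∈ C, f ∘ g ∈ C) : ∃ e ∈ C, e ∘ e = e := by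
  letI : TopologicalSpace (Function.End Z) := inferInstanceAs (TopologicalSpace (Z → Z))
  haveI : T2Space (Function.End Z) := inferInstanceAs (T2Space (Z → Z))
  have hml : ∀ r : Function.End Z, Continuous (· * r) := by
    intro r
    exact continuous_pi fun z => continuous_apply (r z)
  obtain ⟨m, hm, hmm⟩ := exists_idempotent_in_compact_subsemigroup hml C hne hcpt hcomp
  exact ⟨m, hm, hmm⟩

lemma exists_left_inverse {S : Set (Z → Z)} (hcont : ∀ f ∈ S, Continuous f)
    (hcomp : ∀ f ∈ S, ∀ g ∈ S, f ∘ g ∈ S)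
    (hdist : ∀ z z' : Z, z ≠ z' → ∃ c > 0, ∀ f ∈ S, c ≤ dist (f z) (f z'))
    {p : Z → Z} (hp : p ∈ closure S) : ∃ q ∈ closure S, q ∘ p = id := by
  have hEcpt : IsCompact (closure S) := isClosed_closure.isCompact
  set C := (fun f : Z → Z => f ∘ p) '' closure S with hCdef
  have hCne : C.Nonempty := ⟨p ∘ p, ⟨p, hp, rfl⟩⟩
  have hCcpt : IsCompact C :=
    hEcpt.image (continuous_pi fun z => continuous_apply (p z))
  have hCsub : C ⊆ closure S := by
    rintro _ ⟨f, hf, rfl⟩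
    exact comp_mem_closure hcont hcomp hf hp
  have hCcomp : ∀ f ∈ C, ∀ g ∈ C, f ∘ g ∈ C := by
    rintro _ ⟨a, ha, rfl⟩ _ ⟨b, hb, rfl⟩
    refine ⟨a ∘ p ∘ b, ?_, rfl⟩
    exact comp_mem_closure hcont hcomp ha (comp_mem_closure hcont hcomp hp hb)
  obtain ⟨e, heC, hee⟩ := exists_idem C hCne hCcpt hCcomp
  have heinj : Function.Injective e := injective_of_mem_closure hdist (hCsub heC)
  have heid : e = id := by
    funext z
    exact heinj (congrFun hee z)
  obtain ⟨q, hq, hqp⟩ := heC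
  exact ⟨q, hq, hqp.trans heid⟩

lemma exists_inverse {S : Set (Z → Z)} (hcont : ∀ f ∈ S, Continuous f)
    (hcomp : ∀ f ∈ S, ∀ g ∈ S, f ∘ g ∈ S)
    (hdist : ∀ z z' : Z, z ≠ z' → ∃ c > 0, ∀ f ∈ S, c ≤ dist (f z) (f z'))
    {p : Z → Z} (hp : p ∈ closure S) :
    ∃ q ∈ closure S, q ∘ p = id ∧ p ∘ q = id := by
  obtain ⟨q, hq, hqp⟩ := exists_left_inverse hcont hcomp hdist hp
  obtain ⟨r, _, hrq⟩ := exists_left_inverse hcont hcomp hdist hq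
  have hpr : p = r := by
    funext z
    have h1 : q (p z) = z := congrFun hqp z
    have h2 : r (q (p z)) = p z := congrFun hrq (p z)
    rw [h1] at h2
    exact h2.symm
  exact ⟨q, hq, hqp, by rw [hpr]; exact hrq⟩

end Ellis


section Main

variable {X : Type*} [MetricSpace X] [CompactSpace X] [Nonempty X] (T : X ≃ₜ X)

/-- The single-coordinate distal bound. -/
lemma distal_bound (hdistal : IsDistal T) {x y : X} (hne : x ≠ y) :
    ∃ c > 0, ∀ m : ℤ, c ≤ dist (iterZ T m x) (iterZ T m y) := by
  refine ⟨⨅ n : ℤ, dist (iterZ T n x) (iterZ T n y), hdistal x y hne, fun m => ?_⟩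
  exact ciInf_le ⟨0, by rintro _ ⟨n, rfl⟩; exact dist_nonneg⟩ m

/-- The orbit map set `S1 ⊆ X → X`. -/
def S1 : Set (X → X) := Set.range fun n : ℤ => iterZ T n

lemma S1_cont : ∀ f ∈ S1 T, Continuous f := by
  rintro _ ⟨n, rfl⟩; exact continuous_iterZ T n

lemma S1_comp : ∀ f ∈ S1 T, ∀ g ∈ S1 T, f ∘ g ∈ S1 T := by
  rintro _ ⟨n, rfl⟩ _ ⟨m, rfl⟩
  refine ⟨n + m, ?_⟩
  show iterZ T (n + m) = iterZ T n ∘ iterZ T m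
  funext x
  exact iterZ_add T n m x

lemma S1_dist (hdistal : IsDistal T) :
    ∀ z z' : X, z ≠ z' → ∃ c > 0, ∀ f ∈ S1 T, c ≤ dist (f z) (f z') := by
  intro z z' hne
  obtain ⟨c, hc, hbd⟩ := distal_bound T hdistal hne
  exact ⟨c, hc, by rintro _ ⟨n, rfl⟩; exact hbd n⟩

/-- Transitivity of the Ellis semigroup action. -/
lemma exists_ellis_map (hmin : IsMinimal T) (x u : X) :
    ∃ q ∈ closure (S1 T), q x = u := by
  have hev : Continuous fun f : X → X => f x := continuous_apply x
  have hcpt : IsCompact ((fun f : X → X => f x) '' closure (S1 T)) :=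
    isClosed_closure.isCompact.image hev
  have hsub : Set.range (fun n : ℤ => iterZ T n x) ⊆
      (fun f : X → X => f x) '' closure (S1 T) := by
    rintro _ ⟨n, rfl⟩
    exact ⟨iterZ T n, subset_closure ⟨n, rfl⟩, rfl⟩
  have hcl : closure (Set.range fun n : ℤ => iterZ T n x) ⊆
      (fun f : X → X => f x) '' closure (S1 T) :=
    closure_minimal hsub hcpt.isClosed
  have hu : u ∈ closure (Set.range fun n : ℤ => iterZ T n x) := by
    rw [(hmin x).closure_eq]; trivial
  obtain ⟨q, hq, hqx⟩ := hcl hu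
  exact ⟨q, hq, hqx⟩

/-- THM O: lower semicontinuity of pair fibers (openness of distal extensions). -/
lemma fiber_lsc (hdistal : IsDistal T) (hmin : IsMinimal T) (x y : X)
    {ε : ℝ} (hε : 0 < ε) :
    ∃ δ > 0, ∀ u : X, dist u x < δ →
      ∃ q ∈ closure (S1 T), q x = u ∧ dist (q y) y < ε := by
  by_contra hcon
  push_neg at hcon
  choose u hu1 hu2 using fun i : ℕ => hcon (1 / (i + 1)) (by positivity)
  choose q hqE hqx using fun i => exists_ellis_map T hmin x (u i)
  -- cluster point of the sequence q
  have hle : Filter.map q atTop ≤ 𝓟 (closure (S1 T)) := by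
    rw [le_principal_iff]
    exact Filter.mem_map.mpr (Filter.Eventually.of_forall fun i => hqE i)
  obtain ⟨p, hpE, hp⟩ := isClosed_closure.isCompact.exists_clusterPt hle
  -- p belongs to closure of every tail
  have htail : ∀ N : ℕ, p ∈ closure (q '' Set.Ici N) := by
    intro N
    refine mem_closure_iff_clusterPt.mpr (hp.mono ?_)
    rw [le_principal_iff]
    refine Filter.mem_map.mpr ?_
    filter_upwards [Filter.eventually_ge_atTop N] with j hj
    exact ⟨j, hj, rfl⟩
  -- p x = x
  have hpx : p x = x := by
    have hb : ∀ N : ℕ, dist (p x) x ≤ 1 / (N + 1) := by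
      intro N
      have h1 : p x ∈ closure ((fun f : X → X => f x) '' (q '' Set.Ici N)) :=
        image_closure_subset_closure_image (continuous_apply x) ⟨p, htail N, rfl⟩
      have h2 : ((fun f : X → X => f x) '' (q '' Set.Ici N)) ⊆
          {v : X | dist v x ≤ 1 / (N + 1)} := by
        rintro _ ⟨_, ⟨j, hj, rfl⟩, rfl⟩
        show dist (q j x) x ≤ 1 / (N + 1)
        rw [hqx j]
        refine le_trans (hu1 j).le ?_
        apply one_div_le_one_div_of_le (by positivity)
        exact_mod_cast add_le_add_left (Nat.cast_le.mpr hj) 1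
      exact closure_minimal h2 (isClosed_le (continuous_id.dist continuous_const)
        continuous_const) h1
    by_contra hne
    have hdne : dist (p x) x ≠ 0 := fun h => hne (dist_eq_zero.mp h)
    have hpos : 0 < dist (p x) x := lt_of_le_of_ne dist_nonneg (Ne.symm hdne)
    obtain ⟨N, hN⟩ := exists_nat_one_div_lt hpos
    exact absurd (hb N) (not_le.mpr (by exact_mod_cast hN))
  -- the closed bad set
  have hGcl : IsClosed {f : X → X | ∀ g, g ∈ closure (S1 T) → g x = x →
      ε ≤ dist (f (g y)) y} := by
    have : {f : X → X | ∀ g, g ∈ closure (S1 T) → g x = x → ε ≤ dist (f (g y)) y}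
        = ⋂ g : X → X, ⋂ (_ : g ∈ closure (S1 T)) , ⋂ (_ : g x = x),
          {f : X → X | ε ≤ dist (f (g y)) y} := by
      ext f; simp [Set.mem_iInter]
    rw [this]
    refine isClosed_iInter fun g => isClosed_iInter fun _ => isClosed_iInter fun _ => ?_
    exact isClosed_le continuous_const ((continuous_apply (g y)).dist continuous_const)
  have hmemG : ∀ i : ℕ, q i ∈ {f : X → X | ∀ g, g ∈ closure (S1 T) → g x = x →
      ε ≤ dist (f (g y)) y} := by
    intro i g hg hgx
    have hcomp : (q i) ∘ g ∈ closure (S1 T) :=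
      comp_mem_closure (S1_cont T) (S1_comp T) (hqE i) hg
    have : ((q i) ∘ g) x = u i := by
      simp only [Function.comp_apply, hgx, hqx i]
    exact hu2 i ((q i) ∘ g) hcomp this
  have hpG : p ∈ {f : X → X | ∀ g, g ∈ closure (S1 T) → g x = x →
      ε ≤ dist (f (g y)) y} := by
    have h0 : p ∈ closure (q '' Set.Ici 0) := htail 0
    refine closure_minimal ?_ hGcl h0
    rintro _ ⟨j, _, rfl⟩
    exact hmemG j
  -- contradiction via an inverse of p
  obtain ⟨p', hp'E, hp'p, hpp'⟩ :=
    exists_inverse (S1_cont T) (S1_comp T) (S1_dist T hdistal) hpE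
  have hp'x : p' x = x := by
    calc p' x = p' (p x) := by rw [hpx]
    _ = x := congrFun hp'p x
  have hfinal := hpG p' hp'E hp'x
  rw [show p (p' y) = y from congrFun hpp' y, dist_self] at hfinal
  linarith


/-! ### The triple and quintuple pattern maps -/

def F3 (v : ℤ × ℤ) : (X × X × X) → (X × X × X) := fun z =>
  (iterZ T v.1 z.1, iterZ T v.2 z.2.1, iterZ T (v.2 + v.1) z.2.2)

def F5 (v : ℤ × ℤ × ℤ) : (X × X × X × X × X) → (X × X × X × X × X) := fun w =>
  (iterZ T v.1 w.1, iterZ T v.2.1 w.2.1, iterZ T (v.2.2 + v.1) w.2.2.1,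
   iterZ T (v.2.2 + v.2.1) w.2.2.2.1, iterZ T (v.2.2 + v.1 + v.2.1) w.2.2.2.2)

lemma F3_cont : ∀ f ∈ Set.range (F3 T), Continuous f := by
  rintro _ ⟨v, rfl⟩
  exact ((continuous_iterZ T v.1).comp continuous_fst).prodMk
    ((((continuous_iterZ T v.2).comp (continuous_fst.comp continuous_snd))).prodMk
      ((continuous_iterZ T (v.2 + v.1)).comp (continuous_snd.comp continuous_snd)))

lemma F3_comp : ∀ f ∈ Set.range (F3 T), ∀ g ∈ Set.range (F3 T),
    f ∘ g ∈ Set.range (F3 T) := by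
  rintro _ ⟨v, rfl⟩ _ ⟨v', rfl⟩
  refine ⟨(v.1 + v'.1, v.2 + v'.2), ?_⟩
  funext z
  show _ = (F3 T v) ((F3 T v') z)
  simp only [F3]
  refine Prod.ext ?_ (Prod.ext ?_ ?_)
  · exact iterZ_add T v.1 v'.1 z.1
  · exact iterZ_add T v.2 v'.2 z.2.1
  · show iterZ T (v.2 + v'.2 + (v.1 + v'.1)) z.2.2
        = iterZ T (v.2 + v.1) (iterZ T (v'.2 + v'.1) z.2.2)
    rw [show v.2 + v'.2 + (v.1 + v'.1) = (v.2 + v.1) + (v'.2 + v'.1) by ring]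
    exact iterZ_add T _ _ _
  
lemma F3_dist (hdistal : IsDistal T) :
    ∀ z z' : X × X × X, z ≠ z' →
      ∃ c > 0, ∀ f ∈ Set.range (F3 T), c ≤ dist (f z) (f z') := by
  intro z z' hne
  have hcase : z.1 ≠ z'.1 ∨ z.2.1 ≠ z'.2.1 ∨ z.2.2 ≠ z'.2.2 := by
    by_contra h
    push_neg at h
    exact hne (Prod.ext h.1 (Prod.ext h.2.1 h.2.2))
  rcases hcase with h | h | h
  · obtain ⟨c, hc, hbd⟩ := distal_bound T hdistal h
    refine ⟨c, hc, ?_⟩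
    rintro _ ⟨v, rfl⟩
    refine le_trans (hbd v.1) ?_
    rw [Prod.dist_eq]
    exact le_max_left _ _
  · obtain ⟨c, hc, hbd⟩ := distal_bound T hdistal h
    refine ⟨c, hc, ?_⟩
    rintro _ ⟨v, rfl⟩
    refine le_trans (hbd v.2) ?_
    rw [Prod.dist_eq]
    refine le_trans ?_ (le_max_right _ _)
    rw [Prod.dist_eq]
    exact le_max_left _ _
  · obtain ⟨c, hc, hbd⟩ := distal_bound T hdistal h
    refine ⟨c, hc, ?_⟩
    rintro _ ⟨v, rfl⟩
    refine le_trans (hbd (v.2 + v.1)) ?_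
    rw [Prod.dist_eq]
    refine le_trans ?_ (le_max_right _ _)
    rw [Prod.dist_eq]
    exact le_max_right _ _

/-! ### Key estimates coming from `RP` and `fiber_lsc` -/

lemma key_estimates (hdistal : IsDistal T) (hmin : IsMinimal T)
    (x1 x1' x2 : X) (hrp : RP T x1' x1) {η : ℝ} (hη : 0 < η) :
    ∃ k l n : ℤ,
      dist (iterZ T l x2) x2 ≤ η ∧
      dist (iterZ T k x2) x2 ≤ η ∧
      dist (iterZ T (n + k) x1') (iterZ T (n + l) x1) ≤ η := by
  set ε' := η / 4 with hε'def
  have hε' : 0 < ε' := by positivity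
  obtain ⟨δ₁, hδ₁, hlsc₁⟩ := fiber_lsc T hdistal hmin x1' x2 hε'
  obtain ⟨δ₂, hδ₂, hlsc₂⟩ := fiber_lsc T hdistal hmin x1 x2 hε'
  set δ := min (min δ₁ δ₂) ε' with hδdef
  have hδ : 0 < δ := lt_min (lt_min hδ₁ hδ₂) hε'
  obtain ⟨a, b, n, ha, hb, hab⟩ := hrp δ hδ
  obtain ⟨q, hqE, hqx, hqx2⟩ := hlsc₁ a (lt_of_lt_of_le ha (le_trans (min_le_left _ _) (min_le_left _ _)))
  obtain ⟨r, hrE, hrx, hrx2⟩ := hlsc₂ b (lt_of_lt_of_le hb (le_trans (min_le_left _ _) (min_le_right _ _)))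
  -- uniform continuity of T^n
  have hTn : UniformContinuous (iterZ T n) :=
    CompactSpace.uniformContinuous_of_continuous (continuous_iterZ T n)
  obtain ⟨η₁, hη₁, hucn⟩ := Metric.uniformContinuous_iff.mp hTn ε' hε'
  set ρ := min ε' η₁ with hρdef
  have hρ : 0 < ρ := lt_min hε' hη₁
  -- approximate q at x1', x2 by a power
  have happroxq : ∃ k : ℤ, dist (iterZ T k x1') (q x1') < ρ ∧ dist (iterZ T k x2) (q x2) < ρ := by
    have hU : {f : X → X | dist (f x1') (q x1') < ρ ∧ dist (f x2) (q x2) < ρ} ∈ 𝓝 q := by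
      refine IsOpen.mem_nhds ?_ ?_
      · exact IsOpen.inter
          (isOpen_lt ((continuous_apply x1').dist continuous_const) continuous_const)
          (isOpen_lt ((continuous_apply x2).dist continuous_const) continuous_const)
      · simp [hρ]
    obtain ⟨f, hfU, hfS⟩ := mem_closure_iff_nhds.mp hqE _ hU
    obtain ⟨k, rfl⟩ := hfS
    exact ⟨k, hfU.1, hfU.2⟩
  obtain ⟨k, hk1, hk2⟩ := happroxq
  have happroxr : ∃ l : ℤ, dist (iterZ T l x1) (r x1) < ρ ∧ dist (iterZ T l x2) (r x2) < ρ := by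
    have hU : {f : X → X | dist (f x1) (r x1) < ρ ∧ dist (f x2) (r x2) < ρ} ∈ 𝓝 r := by
      refine IsOpen.mem_nhds ?_ ?_
      · exact IsOpen.inter
          (isOpen_lt ((continuous_apply x1).dist continuous_const) continuous_const)
          (isOpen_lt ((continuous_apply x2).dist continuous_const) continuous_const)
      · simp [hρ]
    obtain ⟨f, hfU, hfS⟩ := mem_closure_iff_nhds.mp hrE _ hU
    obtain ⟨l, rfl⟩ := hfS
    exact ⟨l, hfU.1, hfU.2⟩
  obtain ⟨l, hl1, hl2⟩ := happroxr
  refine ⟨k, l, n, ?_, ?_, ?_⟩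
  · calc dist (iterZ T l x2) x2 ≤ dist (iterZ T l x2) (r x2) + dist (r x2) x2 := dist_triangle _ _ _
    _ ≤ ρ + ε' := add_le_add hl2.le hrx2.le
    _ ≤ ε' + ε' := by exact add_le_add_left (min_le_left _ _) _
    _ ≤ η := by rw [hε'def]; linarith
  · calc dist (iterZ T k x2) x2 ≤ dist (iterZ T k x2) (q x2) + dist (q x2) x2 := dist_triangle _ _ _
    _ ≤ ρ + ε' := add_le_add hk2.le hqx2.le
    _ ≤ ε' + ε' := add_le_add_left (min_le_left _ _) _
    _ ≤ η := by rw [hε'def]; linarith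
  · have e1 : iterZ T (n + k) x1' = iterZ T n (iterZ T k x1') := iterZ_add T n k x1'
    have e2 : iterZ T (n + l) x1 = iterZ T n (iterZ T l x1) := iterZ_add T n l x1
    have h1 : dist (iterZ T n (iterZ T k x1')) (iterZ T n a) < ε' := by
      apply hucn
      rw [← hqx]
      exact lt_of_lt_of_le hk1 (min_le_right _ _)
    have h3 : dist (iterZ T n b) (iterZ T n (iterZ T l x1)) < ε' := by
      rw [dist_comm]
      apply hucn
      rw [← hrx]
      exact lt_of_lt_of_le hl1 (min_le_right _ _)
    have h2 : dist (iterZ T n a) (iterZ T n b) < ε' :=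
      lt_of_lt_of_le hab (le_trans (min_le_right _ _) (le_refl _))
    rw [e1, e2]
    calc dist (iterZ T n (iterZ T k x1')) (iterZ T n (iterZ T l x1))
        ≤ dist (iterZ T n (iterZ T k x1')) (iterZ T n a)
          + dist (iterZ T n a) (iterZ T n b)
          + dist (iterZ T n b) (iterZ T n (iterZ T l x1)) := dist_triangle4 _ _ _ _
    _ ≤ ε' + ε' + ε' := by
        exact add_le_add (add_le_add h1.le h2.le) h3.le
    _ ≤ η := by rw [hε'def]; linarith


/-- Helper: if a distance is below `1/(i+1)` for all `i`, the points are equal. -/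
lemma eq_of_dist_le_seq {a b : X} (h : ∀ i : ℕ, dist a b ≤ 1 / (i + 1)) : a = b := by
  by_contra hne
  have hdne : dist a b ≠ 0 := fun h0 => hne (dist_eq_zero.mp h0)
  have hpos : 0 < dist a b := lt_of_le_of_ne dist_nonneg (Ne.symm hdne)
  obtain ⟨N, hN⟩ := exists_nat_one_div_lt hpos
  exact absurd (h N) (not_le.mpr (by exact_mod_cast hN))

/-- The two projections from the quintuple pattern space into the triple one. -/
def R325 (p : (X × X × X × X × X) → (X × X × X × X × X)) :
    (X × X × X) → (X × X × X) := fun z =>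
  ((p (z.1, z.2.1, z.1, z.2.1, z.2.2)).2.2.1,
   (p (z.1, z.2.1, z.1, z.2.1, z.2.2)).2.1,
   (p (z.1, z.2.1, z.1, z.2.1, z.2.2)).2.2.2.2)

def R415 (p : (X × X × X × X × X) → (X × X × X × X × X)) :
    (X × X × X) → (X × X × X) := fun z =>
  ((p (z.2.1, z.1, z.2.1, z.1, z.2.2)).2.2.2.1,
   (p (z.2.1, z.1, z.2.1, z.1, z.2.2)).1,
   (p (z.2.1, z.1, z.2.1, z.1, z.2.2)).2.2.2.2)

lemma R325_gen (v : ℤ × ℤ × ℤ) :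
    R325 (F5 T v) = F3 T (v.2.2 + v.1, v.2.1) := by
  funext z
  show (_, _, _) = (_, _, _)
  simp only [R325, F5, F3]
  refine Prod.ext rfl (Prod.ext rfl ?_)
  show iterZ T (v.2.2 + v.1 + v.2.1) z.2.2 = iterZ T (v.2.1 + (v.2.2 + v.1)) z.2.2
  rw [show v.2.2 + v.1 + v.2.1 = v.2.1 + (v.2.2 + v.1) by ring]

lemma R415_gen (v : ℤ × ℤ × ℤ) :
    R415 (F5 T v) = F3 T (v.2.2 + v.2.1, v.1) := by
  funext z
  simp only [R415, F5, F3]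
  refine Prod.ext rfl (Prod.ext rfl ?_)
  show iterZ T (v.2.2 + v.1 + v.2.1) z.2.2 = iterZ T (v.1 + (v.2.2 + v.2.1)) z.2.2
  rw [show v.2.2 + v.1 + v.2.1 = v.1 + (v.2.2 + v.2.1) by ring]

lemma R325_cont : Continuous (R325 (X := X)) := by
  refine continuous_pi fun z => ?_
  exact ((continuous_apply _).snd.snd.fst).prodMk
    (((continuous_apply _).snd.fst).prodMk ((continuous_apply _).snd.snd.snd.snd))

lemma R415_cont : Continuous (R415 (X := X)) := by
  refine continuous_pi fun z => ?_
  exact ((continuous_apply _).snd.snd.snd.fst).prodMk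
    (((continuous_apply _).fst).prodMk ((continuous_apply _).snd.snd.snd.snd))

lemma R325_mem {p : (X × X × X × X × X) → (X × X × X × X × X)}
    (hp : p ∈ closure (Set.range (F5 T))) :
    R325 p ∈ closure (Set.range (F3 T)) := by
  have h1 : R325 p ∈ R325 '' closure (Set.range (F5 T)) := ⟨p, hp, rfl⟩
  have h2 := image_closure_subset_closure_image (R325_cont (X := X)) h1
  refine closure_minimal ?_ isClosed_closure h2
  rintro _ ⟨_, ⟨v, rfl⟩, rfl⟩
  exact subset_closure ⟨(v.2.2 + v.1, v.2.1), (R325_gen T v).symm⟩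

lemma R415_mem {p : (X × X × X × X × X) → (X × X × X × X × X)}
    (hp : p ∈ closure (Set.range (F5 T))) :
    R415 p ∈ closure (Set.range (F3 T)) := by
  have h1 : R415 p ∈ R415 '' closure (Set.range (F5 T)) := ⟨p, hp, rfl⟩
  have h2 := image_closure_subset_closure_image (R415_cont (X := X)) h1
  refine closure_minimal ?_ isClosed_closure h2
  rintro _ ⟨_, ⟨v, rfl⟩, rfl⟩
  exact subset_closure ⟨(v.2.2 + v.2.1, v.1), (R415_gen T v).symm⟩

/-- The master element `Θ`. -/
lemma exists_theta (hdistal : IsDistal T) (hmin : IsMinimal T)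
    (x1 x1' x2 x3 : X) (hrp : RP T x1' x1) :
    ∃ Θ ∈ closure (Set.range (F5 T)),
      (Θ (x1', x2, x1', x2, x3)).2.1 = x2 ∧
      (Θ (x2, x1, x2, x1, x3)).1 = x2 ∧
      (Θ (x1', x2, x1', x2, x3)).2.2.1 = (Θ (x2, x1, x2, x1, x3)).2.2.2.1 ∧
      (Θ (x1', x2, x1', x2, x3)).2.2.2.2 = (Θ (x2, x1, x2, x1, x3)).2.2.2.2 := by
  set P : X × X × X × X × X := (x1', x2, x1', x2, x3) with hP
  set Q : X × X × X × X × X := (x2, x1, x2, x1, x3) with hQ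
  set W : ℕ → Set ((X × X × X × X × X) → (X × X × X × X × X)) := fun i =>
    closure (Set.range (F5 T)) ∩
      {p | dist ((p P).2.1) x2 ≤ 1 / (i + 1)} ∩
      {p | dist ((p Q).1) x2 ≤ 1 / (i + 1)} ∩
      {p | dist ((p P).2.2.1) ((p Q).2.2.2.1) ≤ 1 / (i + 1)} with hW
  have hWcl : ∀ i, IsClosed (W i) := by
    intro i
    refine ((isClosed_closure.inter ?_).inter ?_).inter ?_
    · exact isClosed_le (((continuous_apply P).snd.fst).dist continuous_const) continuous_const
    · exact isClosed_le (((continuous_apply Q).fst).dist continuous_const) continuous_const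
    · exact isClosed_le (((continuous_apply P).snd.snd.fst).dist
        ((continuous_apply Q).snd.snd.snd.fst)) continuous_const
  have hWcpt : ∀ i, IsCompact (W i) := fun i => (hWcl i).isCompact
  have hWne : ∀ i, (W i).Nonempty := by
    intro i
    obtain ⟨k, l, n, h1, h2, h3⟩ := key_estimates T hdistal hmin x1 x1' x2 hrp
      (show (0:ℝ) < 1 / (i + 1) by positivity)
    refine ⟨F5 T (k, l, n), ⟨⟨subset_closure ⟨(k, l, n), rfl⟩, ?_⟩, ?_⟩, ?_⟩
    · show dist ((F5 T (k, l, n) P).2.1) x2 ≤ 1 / (i + 1)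
      simpa [F5, hP] using h1
    · show dist ((F5 T (k, l, n) Q).1) x2 ≤ 1 / (i + 1)
      simpa [F5, hQ] using h2
    · show dist ((F5 T (k, l, n) P).2.2.1) ((F5 T (k, l, n) Q).2.2.2.1) ≤ 1 / (i + 1)
      simpa [F5, hP, hQ] using h3
  have hWdir : Directed (· ⊇ ·) W := by
    have hanti : Antitone W := by
      intro i j hij
      have hmono : (1 : ℝ) / (j + 1) ≤ 1 / (i + 1) := by
        apply one_div_le_one_div_of_le (by positivity)
        exact_mod_cast add_le_add_left (Nat.cast_le.mpr hij) 1
      rintro p ⟨⟨⟨hpE, hp1⟩, hp2⟩, hp3⟩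
      exact ⟨⟨⟨hpE, le_trans hp1 hmono⟩, le_trans hp2 hmono⟩, le_trans hp3 hmono⟩
    exact hanti.directed_ge
  obtain ⟨Θ, hΘ⟩ := IsCompact.nonempty_iInter_of_directed_nonempty_isCompact_isClosed
    W hWdir hWne hWcpt hWcl
  have hΘi : ∀ i, Θ ∈ W i := Set.mem_iInter.mp hΘ
  have hΘE : Θ ∈ closure (Set.range (F5 T)) := (hΘi 0).1.1.1
  refine ⟨Θ, hΘE, ?_, ?_, ?_, ?_⟩
  · exact eq_of_dist_le_seq (fun i => (hΘi i).1.1.2)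
  · exact eq_of_dist_le_seq (fun i => (hΘi i).1.2)
  · exact eq_of_dist_le_seq (fun i => (hΘi i).2)
  · -- coordinate-5 locality: closed condition holding on generators
    have hsub : closure (Set.range (F5 T)) ⊆
        {p : (X × X × X × X × X) → (X × X × X × X × X) |
          (p P).2.2.2.2 = (p Q).2.2.2.2} := by
      refine closure_minimal ?_ (isClosed_eq ((continuous_apply P).snd.snd.snd.snd)
        ((continuous_apply Q).snd.snd.snd.snd))
      rintro _ ⟨v, rfl⟩
      show iterZ T (v.2.2 + v.1 + v.2.1) P.2.2.2.2 = iterZ T (v.2.2 + v.1 + v.2.1) Q.2.2.2.2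
      rfl
    exact hsub hΘE


end Main

end Stmt11Aux

open Stmt11Aux

/-- If `(x0, x1', x2, x3)` lies in the closed orbit `K` of `(x0,x0,x0,x0)` under
`T^[2]₁, T^[2]₂` and `(x1', x1) ∈ RP`, then `(x0, x1, x2, x3) ∈ K`. -/
theorem stmt11 {X : Type*} [MetricSpace X] [CompactSpace X] [Nonempty X]
    (T : X ≃ₜ X) (hdistal : IsDistal T) (hmin : IsMinimal T) (x0 : X)
    (x1 x1' x2 x3 : X)
    (hmem : (x0, x1', x2, x3) ∈
      closure (Set.range fun v : ℤ × ℤ => act2 T 0 v.1 v.2 (x0, x0, x0, x0)))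
    (hrp : RP T x1' x1) :
    (x0, x1, x2, x3) ∈
      closure (Set.range fun v : ℤ × ℤ => act2 T 0 v.1 v.2 (x0, x0, x0, x0)) := by
  classical
  classical
  -- the evaluated orbit in `X³`
  set evOrb : Set (X × X × X) :=
    Set.range (fun v : ℤ × ℤ => F3 T v (x0, x0, x0)) with hevOrb
  -- Step 1: extract `C` with `C (x0,x0,x0) = (x1', x2, x3)`
  have hproj : (x1', x2, x3) ∈ closure evOrb := by
    have hg : Continuous (fun q : X × X × X × X => (q.2.1, q.2.2.1, q.2.2.2)) :=
      (continuous_snd.fst).prodMk ((continuous_snd.snd.fst).prodMk continuous_snd.snd.snd)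
    have h1 : (x1', x2, x3) ∈ (fun q : X × X × X × X => (q.2.1, q.2.2.1, q.2.2.2)) ''
        closure (Set.range fun v : ℤ × ℤ => act2 T 0 v.1 v.2 (x0, x0, x0, x0)) :=
      ⟨(x0, x1', x2, x3), hmem, rfl⟩
    have h2 := image_closure_subset_closure_image hg h1
    refine closure_minimal ?_ isClosed_closure h2
    rintro _ ⟨_, ⟨v, rfl⟩, rfl⟩
    refine subset_closure ⟨(v.2, v.1), ?_⟩
    show F3 T (v.2, v.1) (x0, x0, x0) = _
    simp only [act2, F3, zero_add]
  have hC : ∃ C ∈ closure (Set.range (F3 T)), C (x0, x0, x0) = (x1', x2, x3) := by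
    have hev : Continuous fun f : (X × X × X) → (X × X × X) => f (x0, x0, x0) :=
      continuous_apply _
    have hcpt : IsCompact ((fun f : (X × X × X) → (X × X × X) => f (x0, x0, x0)) ''
        closure (Set.range (F3 T))) := isClosed_closure.isCompact.image hev
    have hsub : evOrb ⊆ (fun f : (X × X × X) → (X × X × X) => f (x0, x0, x0)) ''
        closure (Set.range (F3 T)) := by
      rintro _ ⟨v, rfl⟩
      exact ⟨F3 T v, subset_closure ⟨v, rfl⟩, rfl⟩
    have := closure_minimal hsub hcpt.isClosed hproj
    obtain ⟨C, hCE, hCx⟩ := this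
    exact ⟨C, hCE, hCx⟩
  obtain ⟨C, hCE, hCx⟩ := hC
  -- Step 2: the master element Θ and the two projections
  obtain ⟨Θ, hΘE, h1, h2, h3, h4⟩ := exists_theta T hdistal hmin x1 x1' x2 x3 hrp
  set A := R415 Θ with hA
  set B := R325 Θ with hB
  have hAE : A ∈ closure (Set.range (F3 T)) := R415_mem T hΘE
  have hBE : B ∈ closure (Set.range (F3 T)) := R325_mem T hΘE
  -- Step 3: B (x1',x2,x3) = A (x1,x2,x3)
  have hBA : B (x1', x2, x3) = A (x1, x2, x3) := by
    show ((Θ (x1', x2, x1', x2, x3)).2.2.1,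
          (Θ (x1', x2, x1', x2, x3)).2.1,
          (Θ (x1', x2, x1', x2, x3)).2.2.2.2)
        = ((Θ (x2, x1, x2, x1, x3)).2.2.2.1,
           (Θ (x2, x1, x2, x1, x3)).1,
           (Θ (x2, x1, x2, x1, x3)).2.2.2.2)
    rw [h1, h2, h3, h4]
  -- Step 4: invert A and conclude
  obtain ⟨A', hA'E, hA'A, _⟩ :=
    exists_inverse (F3_cont T) (F3_comp T) (F3_dist T hdistal) hAE
  set D := A' ∘ (B ∘ C) with hD
  have hDE : D ∈ closure (Set.range (F3 T)) :=
    comp_mem_closure (F3_cont T) (F3_comp T) hA'E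
      (comp_mem_closure (F3_cont T) (F3_comp T) hBE hCE)
  have hDx : D (x0, x0, x0) = (x1, x2, x3) := by
    show A' (B (C (x0, x0, x0))) = (x1, x2, x3)
    rw [hCx, hBA]
    exact congrFun hA'A (x1, x2, x3)
  -- Step 5: push into the closure of the orbit
  have hevD : (x1, x2, x3) ∈ closure evOrb := by
    have h1' : D (x0, x0, x0) ∈
        (fun f : (X × X × X) → (X × X × X) => f (x0, x0, x0)) ''
          closure (Set.range (F3 T)) := ⟨D, hDE, rfl⟩
    have h2' := image_closure_subset_closure_image
      (continuous_apply ((x0, x0, x0) : X × X × X)) h1'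
    rw [hDx] at h1'
    have h3' : (fun f : (X × X × X) → (X × X × X) => f (x0, x0, x0)) ''
        (Set.range (F3 T)) = evOrb := by
      rw [hevOrb, ← Set.range_comp]
      rfl
    rw [← hDx]
    exact (closure_mono (by rw [h3']) : _ ⊆ closure evOrb) h2'
  -- Step 6: append the fixed first coordinate x0
  have hh : Continuous (fun z : X × X × X => ((x0, z.1, z.2.1, z.2.2) : X × X × X × X)) :=
    continuous_const.prodMk (continuous_fst.prodMk
      ((continuous_snd.fst).prodMk continuous_snd.snd))
  have hfin : (x0, x1, x2, x3) ∈ closure ((fun z : X × X × X =>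
      ((x0, z.1, z.2.1, z.2.2) : X × X × X × X)) '' evOrb) := by
    have := image_closure_subset_closure_image hh ⟨(x1, x2, x3), hevD, rfl⟩
    exact this
  refine closure_mono ?_ hfin
  rintro _ ⟨_, ⟨v, rfl⟩, rfl⟩
  refine ⟨(v.2, v.1), ?_⟩
  show act2 T 0 v.2 v.1 (x0, x0, x0, x0) = _
  have h0 : iterZ T 0 x0 = x0 := by simp [iterZ]
  simp only [act2, F3, zero_add, h0]
end
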